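/- arXiv:2603.26616 — 8 statements merged into one kernel-verified Lean document; each statement's English description precedes it below -/
import Mathlib

section
/- Let (A, θ) be a monounary algebra in which every anti-path is finite (there is no infinite sequence x₁, x₂, … of distinct elements with θ(x_{i+1}) = x_i). Then A is generated by the union of its set of leaves (elements not in the image of θ) together with the set of cyclic elements; i.e., every element of A equals θ^n(g) for some n ≥ 0 and some g that is either a leaf or cyclic. -/
/-!
If some `a` is not of the form `θ^[n] g` with `g` a leaf or cyclic, then `a` is not a leaf, and
every preimage of `a` again fails to be generated. Choosing preimages repeatedly gives a backward
orbit `a = g 0, g 1, …` avoiding the generated set. It has no cyclic element, so its terms are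
distinct, and it is an infinite anti-path.
-/

open Function

namespace Monounary

variable {A : Type*} (θ : A → A)

def leafCycleClosure : Set A :=
  {a | ∃ (n : ℕ) (g : A), θ^[n] g = a ∧ ((∀ b : A, θ b ≠ g) ∨ ∃ k ≥ 1, θ^[k] g = g)}

variable {θ}

theorem iterate_ne_self_of_notMem_leafCycleClosure {a : A} (ha : a ∉ leafCycleClosure θ) {k : ℕ}
    (hk : 1 ≤ k) : θ^[k] a ≠ a :=
  fun hcyc => ha ⟨0, a, rfl, Or.inr ⟨k, hk, hcyc⟩⟩

theorem exists_preimage_notMem_leafCycleClosure {a : A} (ha : a ∉ leafCycleClosure θ) :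
    ∃ b ∉ leafCycleClosure θ, θ b = a := by
  obtain ⟨b, hb⟩ : ∃ b, θ b = a := by
    by_contra! hleaf
    exact ha ⟨0, a, rfl, Or.inl hleaf⟩
  refine ⟨b, fun ⟨n, g, hg, hgen⟩ => ha ⟨n + 1, g, ?_, hgen⟩, hb⟩
  rw [iterate_succ_apply', hg, hb]

theorem exists_backward_orbit {T : Set A} (hT : ∀ x ∈ T, ∃ y ∈ T, θ y = x) {a : A} (ha : a ∈ T) :
    ∃ g : ℕ → A, g 0 = a ∧ (∀ i, g i ∈ T) ∧ ∀ i, θ (g (i + 1)) = g i := by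
  choose! f hfT hf using hT
  have hmem : ∀ i, f^[i] a ∈ T := fun i => by
    induction i with
    | zero => exact ha
    | succ i ih => rw [iterate_succ_apply']; exact hfT _ ih
  exact ⟨fun i => f^[i] a, rfl, hmem, fun i => by
    simp only [iterate_succ_apply']; exact hf _ (hmem i)⟩

theorem iterate_apply_add_of_backward {g : ℕ → A} (hg : ∀ i, θ (g (i + 1)) = g i) (i m : ℕ) :
    θ^[m] (g (i + m)) = g i := by
  induction m with
  | zero => rfl
  | succ m ih => rw [iterate_succ_apply, ← add_assoc, hg, ih]

theorem injective_of_backward_of_iterate_ne {g : ℕ → A} (hg : ∀ i, θ (g (i + 1)) = g i)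
    (hacyclic : ∀ i k, 1 ≤ k → θ^[k] (g i) ≠ g i) : Injective g := by
  refine Injective.of_lt_imp_ne fun i j hij heq => hacyclic j (j - i) (by omega) ?_
  calc θ^[j - i] (g j) = θ^[j - i] (g (i + (j - i))) := by rw [Nat.add_sub_cancel' hij.le]
    _ = g j := by rw [iterate_apply_add_of_backward hg, heq]

end Monounary

open Monounary

theorem stmt_9 {A : Type*} (θ : A → A)
    (hap : ¬ ∃ g : ℕ → A, Function.Injective g ∧ ∀ i : ℕ, θ (g (i + 1)) = g i) :
    ∀ a : A, ∃ (n : ℕ) (g : A), θ^[n] g = a ∧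
      ((∀ b : A, θ b ≠ g) ∨ ∃ k ≥ 1, θ^[k] g = g) := by
  intro a
  by_contra ha
  obtain ⟨g, -, hgT, hg⟩ := exists_backward_orbit
    (fun _ hx => exists_preimage_notMem_leafCycleClosure hx) (show a ∉ leafCycleClosure θ from ha)
  exact hap ⟨g, injective_of_backward_of_iterate_ne hg fun i _ hk =>
    iterate_ne_self_of_notMem_leafCycleClosure (hgT i) hk, hg⟩
end

section
/- Let (A, θ) be a monounary algebra and x, y ∈ A acyclic elements with A_x = ⋃_{k ≥ 0} θ^{-k}(x) and A_y = ⋃_{k ≥ 0} θ^{-k}(y). Suppose for every n ≥ 0 and every a ∈ θ^{-n}(x) ∩ A_x, b ∈ θ^{-n}(y) ∩ A_y we have |θ⁻¹(a)| = |θ⁻¹(b)|. Then the partial algebras A_x and A_y are isomorphic: there exists a bijection ψ : A_x → A_y with ψ(x) = y such that for all a ∈ A_x with θ(a) ∈ A_x, ψ(θ(a)) = θ(ψ(a)). -/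
/-!
Since `x` is not periodic, every element of `A_x` lies in `θ^{-n}(x)` for exactly one `n`, so
`A_x` is the disjoint union of these levels, and likewise for `A_y`. Build bijections
`θ^{-n}(x) ≃ θ^{-n}(y)` by recursion on `n`: level `n + 1` is the disjoint union of the fibres
`θ⁻¹(p)` over `p` in level `n`, and the fibres over `p` and over its image have the same
cardinality by hypothesis, so the bijection at level `n` lifts to level `n + 1` fibrewise.
Lifting fibrewise is exactly what makes the glued map commute with `θ`.
-/

open Function Cardinal

universe u

namespace Function

theorem eq_of_iterate_eq_of_not_periodic {α : Type*} {f : α → α} {x : α}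
    (hx : ¬ ∃ k ≥ 1, f^[k] x = x) {a : α} {m n : ℕ}
    (hm : f^[m] a = x) (hn : f^[n] a = x) : m = n := by
  wlog hmn : m ≤ n generalizing m n
  · exact (this hn hm (le_of_not_ge hmn)).symm
  obtain ⟨d, rfl⟩ := Nat.exists_eq_add_of_le hmn
  have hd : f^[d] x = x :=
    calc f^[d] x = f^[d + m] a := by rw [iterate_add_apply, hm]
      _ = x := by rw [add_comm, hn]
  by_contra hne
  exact hx ⟨d, by omega, hd⟩

def iterateSuccFiberEquiv {α : Type*} (f : α → α) (z : α) (n : ℕ) :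
    {a // f^[n + 1] a = z} ≃ Σ p : {a // f^[n] a = z}, {c // f c = p.1} where
  toFun a := ⟨⟨f a, a.2⟩, a.1, rfl⟩
  invFun s := ⟨s.2.1, by rw [iterate_succ_apply, s.2.2, s.1.2]⟩
  left_inv _ := rfl
  right_inv := by
    rintro ⟨⟨p, hp⟩, c, hc⟩
    obtain rfl : f c = p := hc
    rfl

end Function

section LevelEquiv

variable {α β : Type u} (f : α → α) (g : β → β) (x : α) (y : β)
  (hcard : ∀ (n : ℕ) (a : α) (b : β), f^[n] a = x → g^[n] b = y →
    #{c | f c = a} = #{c | g c = b})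

noncomputable def levelEquiv : ∀ n : ℕ, {a // f^[n] a = x} ≃ {b // g^[n] b = y}
  | 0 =>
    { toFun := fun _ => ⟨y, rfl⟩
      invFun := fun _ => ⟨x, rfl⟩
      left_inv := fun a => Subtype.ext a.2.symm
      right_inv := fun b => Subtype.ext b.2.symm }
  | n + 1 =>
    (iterateSuccFiberEquiv f x n).trans <|
      (Equiv.sigmaCongr (levelEquiv n) fun p =>
        Classical.choice (Cardinal.eq.1 (hcard n p.1 _ p.2 (levelEquiv n p).2))).trans
      (iterateSuccFiberEquiv g y n).symm

theorem levelEquiv_succ_comm (n : ℕ) (a : α) (h : f^[n + 1] a = x) :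
    g (levelEquiv f g x y hcard (n + 1) ⟨a, h⟩) = levelEquiv f g x y hcard n ⟨f a, h⟩ :=
  (Classical.choice (Cardinal.eq.1 (hcard n (f a) _ h (levelEquiv f g x y hcard n ⟨f a, h⟩).2))
    ⟨a, rfl⟩).2

open Classical in
noncomputable def levelMap (a : α) : β :=
  if h : ∃ k, f^[k] a = x then levelEquiv f g x y hcard (Nat.find h) ⟨a, Nat.find_spec h⟩ else y

variable {f g x y}

theorem levelMap_eq (hx : ¬ ∃ k ≥ 1, f^[k] x = x) {n : ℕ} {a : α} (hn : f^[n] a = x) :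
    levelMap f g x y hcard a = levelEquiv f g x y hcard n ⟨a, hn⟩ := by
  classical
  have h : ∃ k, f^[k] a = x := ⟨n, hn⟩
  obtain rfl : Nat.find h = n := eq_of_iterate_eq_of_not_periodic hx (Nat.find_spec h) hn
  simp only [levelMap, dif_pos h]

theorem levelMap_self (hx : ¬ ∃ k ≥ 1, f^[k] x = x) : levelMap f g x y hcard x = y :=
  levelMap_eq hcard hx (n := 0) rfl

theorem levelMap_apply_comm (hx : ¬ ∃ k ≥ 1, f^[k] x = x) {a : α} (ha : ∃ k, f^[k] (f a) = x) :
    levelMap f g x y hcard (f a) = g (levelMap f g x y hcard a) := by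
  obtain ⟨n, hn⟩ := ha
  have hn' : f^[n + 1] a = x := hn
  rw [levelMap_eq hcard hx hn, levelMap_eq hcard hx hn']
  exact (levelEquiv_succ_comm f g x y hcard n a hn').symm

theorem levelMap_bijOn (hx : ¬ ∃ k ≥ 1, f^[k] x = x) (hy : ¬ ∃ k ≥ 1, g^[k] y = y) :
    Set.BijOn (levelMap f g x y hcard) {a | ∃ k, f^[k] a = x} {b | ∃ k, g^[k] b = y} := by
  refine ⟨?mapsTo, ?injOn, ?surjOn⟩
  case mapsTo =>
    rintro a ⟨n, hn⟩
    rw [levelMap_eq hcard hx hn]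
    exact ⟨n, (levelEquiv f g x y hcard n _).2⟩
  case injOn =>
    rintro a ⟨m, hm⟩ b ⟨n, hn⟩ hab
    rw [levelMap_eq hcard hx hm, levelMap_eq hcard hx hn] at hab
    obtain rfl : m = n := eq_of_iterate_eq_of_not_periodic hy
      (levelEquiv f g x y hcard m _).2 (hab ▸ (levelEquiv f g x y hcard n _).2)
    exact congrArg Subtype.val ((levelEquiv f g x y hcard m).injective (Subtype.ext hab))
  case surjOn =>
    rintro b ⟨n, hn⟩
    set a := (levelEquiv f g x y hcard n).symm ⟨b, hn⟩
    refine ⟨a, ⟨n, a.2⟩, ?_⟩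
    rw [levelMap_eq hcard hx a.2]
    exact congrArg Subtype.val ((levelEquiv f g x y hcard n).apply_symm_apply _)

end LevelEquiv

theorem stmt_12 {A : Type*} (θ : A → A) (x y : A)
    (hx : ¬ ∃ k ≥ 1, θ^[k] x = x) (hy : ¬ ∃ k ≥ 1, θ^[k] y = y)
    (hcard : ∀ (n : ℕ) (a b : A), θ^[n] a = x → θ^[n] b = y →
      Cardinal.mk {c | θ c = a} = Cardinal.mk {c | θ c = b}) :
    ∃ ψ : A → A, Set.BijOn ψ {a | ∃ k : ℕ, θ^[k] a = x} {a | ∃ k : ℕ, θ^[k] a = y} ∧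
      ψ x = y ∧
      ∀ a : A, (∃ k : ℕ, θ^[k] a = x) → (∃ k : ℕ, θ^[k] (θ a) = x) →
        ψ (θ a) = θ (ψ a) :=
  ⟨levelMap θ θ x y hcard, levelMap_bijOn hcard hx hy, levelMap_self hcard hx,
    fun _ _ ha => levelMap_apply_comm hcard hx ha⟩
end

section
/- Let (A, θ) be a monounary algebra, x, y ∈ A, and A_x = {x} ∪ {a not cyclic : ∃n ≥ 1, θ^n(a) = x and θ^{n−1}(a) not cyclic} (similarly A_y). Suppose ψ : (A ∖ A_x) ∪ {x} → (A ∖ A_y) ∪ {y} is an isomorphism of partial monounary algebras with ψ(x) = y, and φ : A_x → A_y is an isomorphism of partial monounary algebras (necessarily φ(x) = y). Then the map Ψ : A → A defined by Ψ(a) = φ(a) for a ∈ A_x and Ψ(a) = ψ(a) otherwise is an automorphism of (A, θ). -/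
/-- The set `A_z` of elements lying "above" `z`, avoiding the cyclic part. -/
def Az {A : Type*} (θ : A → A) (z : A) : Set A :=
  {z} ∪ {x | (¬ ∃ k ≥ 1, θ^[k] x = x) ∧
    ∃ n : ℕ, θ^[n + 1] x = z ∧ ¬ ∃ k ≥ 1, θ^[k] (θ^[n] x) = θ^[n] x}

/-!
Every element of `A_z` reaches `z` under iteration of `θ`, and no proper iterate of `z`
lies in `A_z ∖ {z}` (such an element would be cyclic). Following `θ` from a preimage of `y`
up to `x`, a partial isomorphism `φ : A_x → A_y` sends `x` to an iterate of `y` lying in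
`A_y`, so `φ x = y = ψ x`. Every arrow `a ↦ θ a` lies inside `A_x` or inside `(A ∖ A_x) ∪ {x}`, and on
each of these two sets the glued map is a partial homomorphism.
-/

open Function Set

section Az

variable {A B : Type*} {θ : A → A} {z a : A}

theorem mem_Az_iff : a ∈ Az θ z ↔
    a = z ∨ a ∉ periodicPts θ ∧ ∃ n, θ^[n + 1] a = z ∧ θ^[n] a ∉ periodicPts θ :=
  Iff.rfl

variable (θ z) in
theorem self_mem_Az : z ∈ Az θ z :=
  Or.inl rfl

theorem exists_iterate_eq_of_mem_Az (ha : a ∈ Az θ z) : ∃ m, θ^[m] a = z := by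
  rcases mem_Az_iff.1 ha with rfl | ⟨-, n, hn, -⟩
  exacts [⟨0, rfl⟩, ⟨n + 1, hn⟩]

theorem apply_mem_Az (ha : a ∈ Az θ z) (hne : a ≠ z) : θ a ∈ Az θ z := by
  obtain ⟨-, n, hn, hnper⟩ := (mem_Az_iff.1 ha).resolve_left hne
  rcases n with _ | n
  · exact Or.inl hn
  · refine mem_Az_iff.2 (Or.inr ⟨fun hper => hnper ?_, n, hn, hnper⟩)
    exact (bijOn_periodicPts (f := θ)).mapsTo.iterate n hper

theorem apply_eq_of_notMem_Az (ha : a ∉ Az θ z) (hθa : θ a ∈ Az θ z) : θ a = z := by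
  by_contra hne
  obtain ⟨hper, n, hn, hnper⟩ := (mem_Az_iff.1 hθa).resolve_left hne
  exact ha (mem_Az_iff.2 (Or.inr
    ⟨fun h => hper ((bijOn_periodicPts (f := θ)).mapsTo h), n + 1, hn, hnper⟩))

variable (θ z) in
theorem mem_Az_and_apply_mem_Az_or (a : A) :
    (a ∈ Az θ z ∧ θ a ∈ Az θ z) ∨ (a ∈ (Az θ z)ᶜ ∪ {z} ∧ θ a ∈ (Az θ z)ᶜ ∪ {z}) := by
  by_cases ha : a ∈ Az θ z <;> by_cases hθa : θ a ∈ Az θ z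
  · exact Or.inl ⟨ha, hθa⟩
  · exact Or.inr ⟨Or.inr (not_imp_comm.1 (apply_mem_Az ha) hθa), Or.inl hθa⟩
  · exact Or.inr ⟨Or.inl ha, Or.inr (apply_eq_of_notMem_Az ha hθa)⟩
  · exact Or.inr ⟨Or.inl ha, Or.inl hθa⟩

theorem iterate_eq_self_of_iterate_mem_Az (m : ℕ) (h : θ^[m] z ∈ Az θ z) : θ^[m] z = z := by
  by_contra hne
  obtain ⟨hper, n, hn, -⟩ := (mem_Az_iff.1 h).resolve_left hne
  rcases m with _ | m
  · exact hne rfl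
  · exact hper ⟨m + 1 + (n + 1), by omega, by
      rw [IsPeriodicPt, IsFixedPt, iterate_add_apply, hn]⟩

theorem exists_iterate_map_eq_map_self {θ' : B → B} {x : A} {φ : A → B}
    (hcomm : ∀ a ∈ Az θ x, θ a ∈ Az θ x → φ (θ a) = θ' (φ a)) (ha : a ∈ Az θ x) :
    ∃ m, θ'^[m] (φ a) = φ x := by
  obtain ⟨m, hm⟩ := exists_iterate_eq_of_mem_Az ha
  induction m generalizing a with
  | zero => exact ⟨0, congrArg φ hm⟩
  | succ m ih =>
    by_cases hax : a = x
    · exact ⟨0, congrArg φ hax⟩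
    have hθa := apply_mem_Az ha hax
    obtain ⟨k, hk⟩ := ih hθa hm
    exact ⟨k + 1, by rw [iterate_succ_apply, ← hcomm a ha hθa, hk]⟩

theorem map_self_eq_of_bijOn_Az {θ' : B → B} {x : A} {y : B} {φ : A → B}
    (hφ : BijOn φ (Az θ x) (Az θ' y))
    (hcomm : ∀ a ∈ Az θ x, θ a ∈ Az θ x → φ (θ a) = θ' (φ a)) : φ x = y := by
  obtain ⟨a, ha, rfl⟩ := hφ.surjOn (self_mem_Az θ' y)
  obtain ⟨m, hm⟩ := exists_iterate_map_eq_map_self hcomm ha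
  have hmem : θ'^[m] (φ a) ∈ Az θ' (φ a) := hm ▸ hφ.mapsTo (self_mem_Az θ x)
  exact hm.symm.trans (iterate_eq_self_of_iterate_mem_Az m hmem)

end Az

theorem Set.BijOn.bijective_piecewise {α β : Type*} {f g : α → β} {s : Set α} {t : Set β}
    [∀ a, Decidable (a ∈ s)] (hf : BijOn f s t) (hg : BijOn g sᶜ tᶜ) :
    Bijective (s.piecewise f g) := by
  refine ⟨(injective_piecewise_iff s).2 ⟨hf.injOn, hg.injOn, ?_⟩, fun b => ?_⟩
  · intro a ha a' ha' h
    exact hg.mapsTo ha' (h ▸ hf.mapsTo ha)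
  · by_cases hb : b ∈ t
    · obtain ⟨a, ha, rfl⟩ := hf.surjOn hb
      exact ⟨a, piecewise_eq_of_mem s f g ha⟩
    · obtain ⟨a, ha, rfl⟩ := hg.surjOn hb
      exact ⟨a, piecewise_eq_of_notMem s f g ha⟩

open scoped Classical in
theorem stmt_13_general {A : Type*} (θ : A → A) (x y : A) (ψ φ : A → A)
    (hψ : Set.BijOn ψ ((Az θ x)ᶜ ∪ {x}) ((Az θ y)ᶜ ∪ {y}))
    (hψx : ψ x = y)
    (hψcomm : ∀ a ∈ (Az θ x)ᶜ ∪ {x}, θ a ∈ (Az θ x)ᶜ ∪ {x} → ψ (θ a) = θ (ψ a))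
    (hφ : Set.BijOn φ (Az θ x) (Az θ y))
    (hφcomm : ∀ a ∈ Az θ x, θ a ∈ Az θ x → φ (θ a) = θ (φ a)) :
    Function.Bijective (fun a => if a ∈ Az θ x then φ a else ψ a) ∧
      ∀ a : A, (if θ a ∈ Az θ x then φ (θ a) else ψ (θ a))
        = θ (if a ∈ Az θ x then φ a else ψ a) := by
  have hφx : φ x = y := map_self_eq_of_bijOn_Az hφ hφcomm
  have hψ' : BijOn ψ (Az θ x)ᶜ (Az θ y)ᶜ := by
    have := hψ.sdiff_singleton (mem_union_right _ rfl)
    rwa [hψx, union_sdiff_right, union_sdiff_right,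
      sdiff_singleton_eq_self (notMem_compl_iff.2 (self_mem_Az θ x)),
      sdiff_singleton_eq_self (notMem_compl_iff.2 (self_mem_Az θ y))] at this
  have hΨψ : EqOn ((Az θ x).piecewise φ ψ) ψ ((Az θ x)ᶜ ∪ {x}) :=
    (piecewise_eqOn_compl _ φ ψ).union <| eqOn_singleton.2 <| by
      rw [piecewise_eq_of_mem _ _ _ (self_mem_Az θ x), hφx, hψx]
  refine ⟨hφ.bijective_piecewise hψ', fun a => ?_⟩
  change (Az θ x).piecewise φ ψ (θ a) = θ ((Az θ x).piecewise φ ψ a)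
  rcases mem_Az_and_apply_mem_Az_or θ x a with ⟨ha, hθa⟩ | ⟨ha, hθa⟩
  · rw [piecewise_eq_of_mem _ _ _ ha, piecewise_eq_of_mem _ _ _ hθa]
    exact hφcomm a ha hθa
  · rw [hΨψ ha, hΨψ hθa]
    exact hψcomm a ha hθa

open scoped Classical in
theorem stmt_13 {A : Type*} (θ : A → A) (x y : A) (ψ φ : A → A)
    (hψ : Set.BijOn ψ ((Az θ x)ᶜ ∪ {x}) ((Az θ y)ᶜ ∪ {y}))
    (hψx : ψ x = y)
    (hψdom : ∀ a ∈ (Az θ x)ᶜ ∪ {x},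
      (θ a ∈ (Az θ x)ᶜ ∪ {x} ↔ θ (ψ a) ∈ (Az θ y)ᶜ ∪ {y}))
    (hψcomm : ∀ a ∈ (Az θ x)ᶜ ∪ {x}, θ a ∈ (Az θ x)ᶜ ∪ {x} → ψ (θ a) = θ (ψ a))
    (hφ : Set.BijOn φ (Az θ x) (Az θ y))
    (hφdom : ∀ a ∈ Az θ x, (θ a ∈ Az θ x ↔ θ (φ a) ∈ Az θ y))
    (hφcomm : ∀ a ∈ Az θ x, θ a ∈ Az θ x → φ (θ a) = θ (φ a)) :
    Function.Bijective (fun a => if a ∈ Az θ x then φ a else ψ a) ∧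
      ∀ a : A, (if θ a ∈ Az θ x then φ (θ a) else ψ (θ a))
        = θ (if a ∈ Az θ x then φ a else ψ a) :=
  stmt_13_general θ x y ψ φ hψ hψx hψcomm hφ hφcomm
end

section
/- A monounary algebra (A, θ) is ultrahomogeneous if and only if it is 1-ultrahomogeneous. That is: every isomorphism between finitely generated subalgebras of A extends to an automorphism of A if and only if every isomorphism between 1-generated subalgebras of A extends to an automorphism of A. -/
/-- The subalgebra of `(A, θ)` generated by `S`. -/
def cl {A : Type*} (θ : A → A) (S : Set A) : Set A :=
  {a | ∃ s ∈ S, ∃ n : ℕ, θ^[n] s = a}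

/-- `f` restricts to an isomorphism from the subalgebra `B` onto the subalgebra `B'`. -/
def IsoOn {A : Type*} (θ : A → A) (B B' : Set A) (f : A → A) : Prop :=
  Set.BijOn f B B' ∧ ∀ a ∈ B, f (θ a) = θ (f a)

/-- `f` (defined on `B`) extends to an automorphism of `(A, θ)`. -/
def ExtendsToAuto {A : Type*} (θ : A → A) (B : Set A) (f : A → A) : Prop :=
  ∃ g : A → A, Function.Bijective g ∧ (∀ a, g (θ a) = θ (g a)) ∧ ∀ a ∈ B, g a = f a

namespace Stmt14

variable {A : Type*} {θ : A → A}

lemma cl_theta {S : Set A} {a : A} (ha : a ∈ cl θ S) : θ a ∈ cl θ S := by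
  obtain ⟨s, hs, n, rfl⟩ := ha
  exact ⟨s, hs, n + 1, Function.iterate_succ_apply' θ n s⟩

lemma cl_iter {S : Set A} {a : A} (ha : a ∈ cl θ S) (n : ℕ) : θ^[n] a ∈ cl θ S := by
  induction n with
  | zero => exact ha
  | succ n ih => rw [Function.iterate_succ_apply']; exact cl_theta ih

lemma mem_cl_self {S : Set A} {x : A} (hx : x ∈ S) : x ∈ cl θ S := ⟨x, hx, 0, rfl⟩

lemma iter_mem_cl_singleton (θ : A → A) (x : A) (n : ℕ) : θ^[n] x ∈ cl θ {x} :=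
  ⟨x, rfl, n, rfl⟩

lemma mem_cl_singleton {x v : A} : v ∈ cl θ {x} ↔ ∃ n : ℕ, θ^[n] x = v := by
  constructor
  · rintro ⟨s, hs, n, rfl⟩
    rcases Set.mem_singleton_iff.mp hs with rfl
    exact ⟨n, rfl⟩
  · rintro ⟨n, rfl⟩
    exact ⟨x, rfl, n, rfl⟩

lemma cl_mono {S T : Set A} (hST : S ⊆ T) : cl θ S ⊆ cl θ T := by
  rintro v ⟨s, hs, n, rfl⟩
  exact ⟨s, hST hs, n, rfl⟩

lemma cl_empty : cl θ (∅ : Set A) = ∅ := by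
  ext v
  simp [cl]

lemma cl_insert_eq (x : A) (S : Set A) : cl θ (insert x S) = cl θ {x} ∪ cl θ S := by
  ext v
  constructor
  · rintro ⟨s, hs, n, rfl⟩
    rcases Set.mem_insert_iff.mp hs with rfl | hs
    · exact Or.inl ⟨s, rfl, n, rfl⟩
    · exact Or.inr ⟨s, hs, n, rfl⟩
  · rintro (⟨s, hs, n, rfl⟩ | ⟨s, hs, n, rfl⟩)
    · exact ⟨s, Set.mem_insert_iff.mpr (Or.inl (Set.mem_singleton_iff.mp hs)), n, rfl⟩
    · exact ⟨s, Set.mem_insert_iff.mpr (Or.inr hs), n, rfl⟩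

lemma iter_comm {g : A → A} (hg : ∀ v, g (θ v) = θ (g v)) (n : ℕ) (v : A) :
    g (θ^[n] v) = θ^[n] (g v) := by
  induction n with
  | zero => rfl
  | succ n ih => rw [Function.iterate_succ_apply', Function.iterate_succ_apply', hg, ih]

lemma iter_comm_on {S : Set A} {g : A → A}
    (hg : ∀ v ∈ cl θ S, g (θ v) = θ (g v)) {x : A} (hx : x ∈ cl θ S) (n : ℕ) :
    g (θ^[n] x) = θ^[n] (g x) := by
  induction n with
  | zero => rfl
  | succ n ih =>
    rw [Function.iterate_succ_apply' θ n x, hg _ (cl_iter hx n), ih,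
      ← Function.iterate_succ_apply' θ n (g x)]

/-- The patching lemma: given a global automorphism `e` and a pair of
preimage-closed sets `B₁ B₂` swapped by `e` (equal or disjoint), with
suitable boundary conditions, there is an automorphism equal to `e` on `B₁`
and the identity outside `B₁ ∪ B₂`. -/
lemma patch (e : A ≃ A) (heq : ∀ v, e (θ v) = θ (e v))
    (B₁ B₂ : Set A)
    (himg : ∀ v, v ∈ B₁ ↔ e v ∈ B₂)
    (hpre₁ : ∀ b, θ b ∈ B₁ → b ∈ B₁) (hpre₂ : ∀ b, θ b ∈ B₂ → b ∈ B₂)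
    (hcase : B₁ = B₂ ∨ ∀ b, b ∈ B₁ → b ∈ B₂ → False)
    (hbd₁ : ∀ b ∈ B₁, θ b ∉ B₁ → θ (e b) = θ b ∧ θ b ∉ B₂)
    (hbd₂ : ∀ b ∈ B₂, θ b ∉ B₂ → θ (e.symm b) = θ b ∧ θ b ∉ B₁) :
    ∃ k : A → A, Function.Bijective k ∧ (∀ a, k (θ a) = θ (k a)) ∧
      (∀ b ∈ B₁, k b = e b) ∧ (∀ b, b ∉ B₁ → b ∉ B₂ → k b = b) := by
  classical
  have hsymm : ∀ v, e.symm (θ v) = θ (e.symm v) := by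
    intro v
    have : e (e.symm (θ v)) = e (θ (e.symm v)) := by
      rw [heq, e.apply_symm_apply, e.apply_symm_apply]
    exact e.injective this
  have himg' : ∀ v, v ∈ B₂ ↔ e.symm v ∈ B₁ := by
    intro v
    rw [himg (e.symm v), e.apply_symm_apply]
  set k : A → A := fun b => if b ∈ B₁ then e b else if b ∈ B₂ then e.symm b else b with hk
  set k' : A → A := fun b => if b ∈ B₂ then e.symm b else if b ∈ B₁ then e b else b with hk'
  have hkB₁ : ∀ b ∈ B₁, k b = e b := by
    intro b hb; simp [hk, hb]
  have hkout : ∀ b, b ∉ B₁ → b ∉ B₂ → k b = b := by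
    intro b hb₁ hb₂; simp [hk, hb₁, hb₂]
  have hleft : ∀ b, k' (k b) = b := by
    intro b
    by_cases hb₁ : b ∈ B₁
    · have h2 : e b ∈ B₂ := (himg b).mp hb₁
      simp [hk, hk', hb₁, h2]
    · by_cases hb₂ : b ∈ B₂
      · rcases hcase with hEq | hdisj
        · exact absurd (hEq ▸ hb₂) hb₁
        · have h1 : e.symm b ∈ B₁ := (himg' b).mp hb₂
          have h2 : e.symm b ∉ B₂ := fun hmem => hdisj _ h1 hmem
          simp [hk, hk', hb₁, hb₂, h1, h2]
      · simp [hk, hk', hb₁, hb₂]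
  have hright : ∀ b, k (k' b) = b := by
    intro b
    by_cases hb₂ : b ∈ B₂
    · have h1 : e.symm b ∈ B₁ := (himg' b).mp hb₂
      simp [hk, hk', hb₂, h1]
    · by_cases hb₁ : b ∈ B₁
      · rcases hcase with hEq | hdisj
        · exact absurd (hEq ▸ hb₁) hb₂
        · have h2 : e b ∈ B₂ := (himg b).mp hb₁
          have h3 : e b ∉ B₁ := fun hmem => hdisj _ hmem h2
          simp [hk, hk', hb₁, hb₂, h2, h3]
      · simp [hk, hk', hb₁, hb₂]
  have hbij : Function.Bijective k :=
    Function.bijective_iff_has_inverse.mpr ⟨k', hleft, hright⟩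
  refine ⟨k, hbij, ?_, hkB₁, hkout⟩
  intro b
  by_cases hb₁ : b ∈ B₁
  · rw [hkB₁ b hb₁]
    by_cases htb : θ b ∈ B₁
    · rw [hkB₁ _ htb, heq]
    · obtain ⟨h1, h2⟩ := hbd₁ b hb₁ htb
      rw [hkout _ htb h2, h1]
  · by_cases hb₂ : b ∈ B₂
    · rcases hcase with hEq | hdisj
      · exact absurd (hEq ▸ hb₂) hb₁
      · have hkb : k b = e.symm b := by simp [hk, hb₁, hb₂]
        rw [hkb]
        by_cases htb : θ b ∈ B₂
        · have htb₁ : θ b ∉ B₁ := fun hmem => hdisj _ hmem htb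
          have : k (θ b) = e.symm (θ b) := by simp [hk, htb₁, htb]
          rw [this, hsymm]
        · obtain ⟨h1, h2⟩ := hbd₂ b hb₂ htb
          rw [hkout _ h2 htb, h1]
    · have htb₁ : θ b ∉ B₁ := fun hmem => hb₁ (hpre₁ b hmem)
      have htb₂ : θ b ∉ B₂ := fun hmem => hb₂ (hpre₂ b hmem)
      rw [hkout _ htb₁ htb₂, hkout _ hb₁ hb₂]

/-- Core lemma: if `h` is an isomorphism on `cl (insert x S₀)` which is the
identity on `cl S₀`, then there is an automorphism agreeing with `h` on
`cl (insert x S₀)`. -/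
lemma core
    (H1 : ∀ x y : A, ∀ f : A → A,
      IsoOn θ (cl θ {x}) (cl θ {y}) f → ExtendsToAuto θ (cl θ {x}) f)
    (S₀ : Set A) (x : A) (h : A → A)
    (hinj : Set.InjOn h (cl θ (insert x S₀)))
    (hequiv : ∀ v ∈ cl θ (insert x S₀), h (θ v) = θ (h v))
    (hid : ∀ v ∈ cl θ S₀, h v = v) :
    ∃ k : A → A, Function.Bijective k ∧ (∀ a, k (θ a) = θ (k a)) ∧
      ∀ v ∈ cl θ (insert x S₀), k v = h v := by
  classical
  have hsub : cl θ {x} ⊆ cl θ (insert x S₀) := by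
    apply cl_mono; intro s hs
    exact Set.mem_insert_iff.mpr (Or.inl (Set.mem_singleton_iff.mp hs))
  have hsub₀ : cl θ S₀ ⊆ cl θ (insert x S₀) := by
    apply cl_mono; exact Set.subset_insert x S₀
  have hxmem : x ∈ cl θ (insert x S₀) := mem_cl_self (Set.mem_insert x S₀)
  -- h iterates on the orbit of x
  have hiter : ∀ n : ℕ, h (θ^[n] x) = θ^[n] (h x) := fun n =>
    iter_comm_on hequiv hxmem n
  -- h restricted to cl {x} is an IsoOn onto cl {h x}
  have hiso : IsoOn θ (cl θ {x}) (cl θ {h x}) h := by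
    constructor
    · refine ⟨?_, ?_, ?_⟩
      · rintro v hv
        obtain ⟨n, rfl⟩ := mem_cl_singleton.mp hv
        rw [hiter]
        exact iter_mem_cl_singleton θ (h x) n
      · exact fun a ha b hb hab => hinj (hsub ha) (hsub hb) hab
      · rintro u hu
        obtain ⟨n, rfl⟩ := mem_cl_singleton.mp hu
        exact ⟨θ^[n] x, iter_mem_cl_singleton θ x n, hiter n⟩
    · exact fun a ha => hequiv a (hsub ha)
  obtain ⟨g, hgbij, hgeq, hgagree⟩ := H1 x (h x) h hiso
  -- a global automorphism agreeing with h on cl {x}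
  set e : A ≃ A := Equiv.ofBijective g hgbij with he
  have hecoe : ∀ v, e v = g v := fun v => rfl
  have heeq : ∀ v, e (θ v) = θ (e v) := fun v => hgeq v
  have hgx : g x = h x := hgagree x (iter_mem_cl_singleton θ x 0)
  have hgiter : ∀ n : ℕ, g (θ^[n] x) = θ^[n] (h x) := by
    intro n
    rw [iter_comm hgeq, hgx]
  by_cases hmerge : ∃ n : ℕ, θ^[n] x ∈ cl θ S₀
  · -- x merges into cl S₀; let m be minimal
    set m := Nat.find hmerge with hm
    have hmmem : θ^[m] x ∈ cl θ S₀ := Nat.find_spec hmerge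
    have hmmin : ∀ i, i < m → θ^[i] x ∉ cl θ S₀ := fun i hi => Nat.find_min hmerge hi
    rcases Nat.eq_zero_or_pos m with hm0 | hmpos
    · -- x itself is in cl S₀: h is the identity on cl (insert x S₀)
      have hxS : x ∈ cl θ S₀ := by rw [hm0] at hmmem; exact hmmem
      refine ⟨id, Function.bijective_id, fun a => rfl, ?_⟩
      intro v hv
      rcases (cl_insert_eq x S₀ ▸ hv : v ∈ cl θ {x} ∪ cl θ S₀) with hv | hv
      · obtain ⟨n, rfl⟩ := mem_cl_singleton.mp hv
        exact (hid _ (cl_iter hxS n)).symm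
      · exact (hid v hv).symm
    · -- the interesting case: swap the trees above a = θ^[m-1] x and a' = θ^[m-1] (h x)
      set a := θ^[m - 1] x with ha
      set a' := θ^[m - 1] (h x) with ha'
      have hanot : a ∉ cl θ S₀ := hmmin (m - 1) (Nat.sub_lt hmpos Nat.one_pos)
      -- θ^[i] (h x) ∉ cl S₀ for i < m
      have hmins' : ∀ i, i < m → θ^[i] (h x) ∉ cl θ S₀ := by
        intro i hi hmem
        have h1 : h (θ^[i] (h x)) = θ^[i] (h x) := hid _ hmem
        have h2 : h (θ^[i] x) = θ^[i] (h x) := hiter i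
        have := hinj (hsub (iter_mem_cl_singleton θ x i)) (hsub₀ hmem) (h2.trans h1.symm)
        exact hmmin i hi (this ▸ hmem)
      have hanot' : a' ∉ cl θ S₀ := hmins' (m - 1) (Nat.sub_lt hmpos Nat.one_pos)
      have hsucc : m - 1 + 1 = m := Nat.succ_pred_eq_of_pos hmpos
      have hiter_pred : ∀ y : A, θ (θ^[m - 1] y) = θ^[m] y := by
        intro y
        conv_rhs => rw [← hsucc]
        rw [Function.iterate_succ_apply']
      have htha : θ a = θ^[m] x := by
        rw [ha, hiter_pred]
      -- θ^[m] (h x) = θ^[m] x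
      have hmfix : θ^[m] (h x) = θ^[m] x := by
        have := hiter m
        rw [hid _ hmmem] at this
        exact this.symm
      have htha' : θ a' = θ^[m] x := by
        rw [ha', hiter_pred, hmfix]
      have hga : g a = a' := by rw [ha, hgiter]
      -- the trees
      set B₁ : Set A := {v | ∃ n : ℕ, θ^[n] v = a} with hB₁
      set B₂ : Set A := {v | ∃ n : ℕ, θ^[n] v = a'} with hB₂
      have hclB₁ : ∀ v ∈ cl θ S₀, v ∉ B₁ := by
        rintro v hv ⟨n, hn⟩
        exact hanot (hn ▸ cl_iter hv n)
      have hclB₂ : ∀ v ∈ cl θ S₀, v ∉ B₂ := by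
        rintro v hv ⟨n, hn⟩
        exact hanot' (hn ▸ cl_iter hv n)
      have himg : ∀ v, v ∈ B₁ ↔ e v ∈ B₂ := by
        intro v
        constructor
        · rintro ⟨n, hn⟩
          exact ⟨n, by rw [hecoe, ← iter_comm hgeq, hn, hga]⟩
        · rintro ⟨n, hn⟩
          refine ⟨n, ?_⟩
          rw [hecoe, ← iter_comm hgeq] at hn
          have : g (θ^[n] v) = g a := by rw [hn, hga]
          exact hgbij.injective this
      have hpre₁ : ∀ b, θ b ∈ B₁ → b ∈ B₁ := by
        rintro b ⟨n, hn⟩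
        exact ⟨n + 1, by rw [Function.iterate_succ_apply, hn]⟩
      have hpre₂ : ∀ b, θ b ∈ B₂ → b ∈ B₂ := by
        rintro b ⟨n, hn⟩
        exact ⟨n + 1, by rw [Function.iterate_succ_apply, hn]⟩
      have hmx : θ^[m] x ∈ cl θ S₀ := hmmem
      have hwB₁ : θ^[m] x ∉ B₁ := hclB₁ _ hmx
      have hwB₂ : θ^[m] x ∉ B₂ := hclB₂ _ hmx
      have hcase : B₁ = B₂ ∨ ∀ b, b ∈ B₁ → b ∈ B₂ → False := by
        by_cases haa : a = a'
        · left; rw [hB₁, hB₂, haa]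
        · right
          rintro b ⟨i, hi⟩ ⟨j, hj⟩
          rcases lt_trichotomy i j with hij | hij | hij
          · -- a' = θ^[j - i] a with j - i ≥ 1
            have : θ^[j - i] a = a' := by
              rw [← hi, ← Function.iterate_add_apply, Nat.sub_add_cancel hij.le]
              exact hj
            have hj1 : 1 ≤ j - i := Nat.le_sub_of_add_le (by omega)
            have : θ^[j - i - 1] (θ a) = a' := by
              rw [← Function.iterate_succ_apply, ← this]
              congr 1
              omega
            apply hanot'
            rw [← this, htha]
            exact cl_iter hmx _
          · exact haa (by rw [← hi, ← hj, hij])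
          · have : θ^[i - j] a' = a := by
              rw [← hj, ← Function.iterate_add_apply, Nat.sub_add_cancel hij.le]
              exact hi
            have : θ^[i - j - 1] (θ a') = a := by
              rw [← Function.iterate_succ_apply, ← this]
              congr 1
              omega
            apply hanot
            rw [← this, htha']
            exact cl_iter hmx _
      have hbd₁ : ∀ b ∈ B₁, θ b ∉ B₁ → θ (e b) = θ b ∧ θ b ∉ B₂ := by
        rintro b ⟨n, hn⟩ htb
        have hb : b = a := by
          cases n with
          | zero => exact hn
          | succ n =>
            exact absurd ⟨n, by rw [← Function.iterate_succ_apply, hn]⟩ htb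
        subst hb
        refine ⟨?_, ?_⟩
        · rw [hecoe, hga, htha', htha]
        · rw [htha]; exact hwB₂
      have hbd₂ : ∀ b ∈ B₂, θ b ∉ B₂ → θ (e.symm b) = θ b ∧ θ b ∉ B₁ := by
        rintro b ⟨n, hn⟩ htb
        have hb : b = a' := by
          cases n with
          | zero => exact hn
          | succ n =>
            exact absurd ⟨n, by rw [← Function.iterate_succ_apply, hn]⟩ htb
        subst hb
        have hsa : e.symm a' = a := by
          apply e.injective
          rw [e.apply_symm_apply, hecoe, hga]
        refine ⟨?_, ?_⟩
        · rw [hsa, htha, htha']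
        · rw [htha']; exact hwB₁
      obtain ⟨k, hkbij, hkeq, hkB₁, hkout⟩ :=
        patch e heeq B₁ B₂ himg hpre₁ hpre₂ hcase hbd₁ hbd₂
      refine ⟨k, hkbij, hkeq, ?_⟩
      intro v hv
      rcases (cl_insert_eq x S₀ ▸ hv : v ∈ cl θ {x} ∪ cl θ S₀) with hv | hv
      · obtain ⟨n, rfl⟩ := mem_cl_singleton.mp hv
        by_cases hn : n < m
        · have hmem : θ^[n] x ∈ B₁ := by
            refine ⟨m - 1 - n, ?_⟩
            rw [← Function.iterate_add_apply, ha]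
            congr 1
            omega
          rw [hkB₁ _ hmem, hecoe, hgagree _ (iter_mem_cl_singleton θ x n)]
        · push_neg at hn
          have hmem : θ^[n] x ∈ cl θ S₀ := by
            have : θ^[n] x = θ^[n - m] (θ^[m] x) := by
              rw [← Function.iterate_add_apply]
              congr 1
              omega
            rw [this]
            exact cl_iter hmmem _
          rw [hkout _ (hclB₁ _ hmem) (hclB₂ _ hmem), hid _ hmem]
      · rw [hkout _ (hclB₁ _ hv) (hclB₂ _ hv), hid _ hv]
  · -- no merging: swap whole connected components
    push_neg at hmerge
    set B₁ : Set A := {v | ∃ i j : ℕ, θ^[i] v = θ^[j] x} with hB₁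
    set B₂ : Set A := {v | ∃ i j : ℕ, θ^[i] v = θ^[j] (h x)} with hB₂
    have hclB₁ : ∀ v ∈ cl θ S₀, v ∉ B₁ := by
      rintro v hv ⟨i, j, hij⟩
      exact hmerge j (hij ▸ cl_iter hv i)
    have hclB₂ : ∀ v ∈ cl θ S₀, v ∉ B₂ := by
      rintro v hv ⟨i, j, hij⟩
      have h1 : h (θ^[i] v) = θ^[i] v := hid _ (cl_iter hv i)
      have h2 : h (θ^[j] x) = θ^[j] (h x) := hiter j
      have := hinj (hsub₀ (cl_iter hv i)) (hsub (iter_mem_cl_singleton θ x j))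
        (by rw [h1, h2, hij])
      exact hmerge j (this ▸ cl_iter hv i)
    have himg : ∀ v, v ∈ B₁ ↔ e v ∈ B₂ := by
      intro v
      constructor
      · rintro ⟨i, j, hij⟩
        refine ⟨i, j, ?_⟩
        rw [hecoe, ← iter_comm hgeq, hij, hgiter]
      · rintro ⟨i, j, hij⟩
        refine ⟨i, j, ?_⟩
        rw [hecoe, ← iter_comm hgeq, ← hgiter] at hij
        exact hgbij.injective hij
    have hpre₁ : ∀ b, θ b ∈ B₁ → b ∈ B₁ := by
      rintro b ⟨i, j, hij⟩
      exact ⟨i + 1, j, by rw [Function.iterate_succ_apply, hij]⟩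
    have hpre₂ : ∀ b, θ b ∈ B₂ → b ∈ B₂ := by
      rintro b ⟨i, j, hij⟩
      exact ⟨i + 1, j, by rw [Function.iterate_succ_apply, hij]⟩
    have hth₁ : ∀ b ∈ B₁, θ b ∈ B₁ := by
      rintro b ⟨i, j, hij⟩
      refine ⟨i, j + 1, ?_⟩
      rw [← Function.iterate_succ_apply, Function.iterate_succ_apply' θ i b,
        Function.iterate_succ_apply' θ j x, hij]
    have hth₂ : ∀ b ∈ B₂, θ b ∈ B₂ := by
      rintro b ⟨i, j, hij⟩
      refine ⟨i, j + 1, ?_⟩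
      rw [← Function.iterate_succ_apply, Function.iterate_succ_apply' θ i b,
        Function.iterate_succ_apply' θ j (h x), hij]
    have hcase : B₁ = B₂ ∨ ∀ b, b ∈ B₁ → b ∈ B₂ → False := by
      by_cases hcc : ∃ p q : ℕ, θ^[p] x = θ^[q] (h x)
      · left
        obtain ⟨p, q, hpq⟩ := hcc
        ext v
        constructor
        · rintro ⟨i, j, hij⟩
          refine ⟨p + i, j + q, ?_⟩
          rw [Function.iterate_add_apply, hij, ← Function.iterate_add_apply,
            Nat.add_comm p j, Function.iterate_add_apply, hpq,
            ← Function.iterate_add_apply]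
        · rintro ⟨i, j, hij⟩
          refine ⟨q + i, j + p, ?_⟩
          rw [Function.iterate_add_apply, hij, ← Function.iterate_add_apply,
            Nat.add_comm q j, Function.iterate_add_apply, ← hpq,
            ← Function.iterate_add_apply]
      · right
        rintro b ⟨i, j, hij⟩ ⟨p, q, hpq⟩
        apply hcc
        rcases le_total i p with hip | hip
        · refine ⟨p - i + j, q, ?_⟩
          rw [Function.iterate_add_apply, ← hij, ← Function.iterate_add_apply,
            Nat.sub_add_cancel hip, hpq]
        · refine ⟨j, i - p + q, ?_⟩
          rw [Function.iterate_add_apply, ← hpq, ← Function.iterate_add_apply,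
            Nat.sub_add_cancel hip, hij]
    have hbd₁ : ∀ b ∈ B₁, θ b ∉ B₁ → θ (e b) = θ b ∧ θ b ∉ B₂ := by
      intro b hb htb
      exact absurd (hth₁ b hb) htb
    have hbd₂ : ∀ b ∈ B₂, θ b ∉ B₂ → θ (e.symm b) = θ b ∧ θ b ∉ B₁ := by
      intro b hb htb
      exact absurd (hth₂ b hb) htb
    obtain ⟨k, hkbij, hkeq, hkB₁, hkout⟩ :=
      patch e heeq B₁ B₂ himg hpre₁ hpre₂ hcase hbd₁ hbd₂
    refine ⟨k, hkbij, hkeq, ?_⟩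
    intro v hv
    rcases (cl_insert_eq x S₀ ▸ hv : v ∈ cl θ {x} ∪ cl θ S₀) with hv | hv
    · obtain ⟨n, rfl⟩ := mem_cl_singleton.mp hv
      have hmem : θ^[n] x ∈ B₁ := ⟨0, n, rfl⟩
      rw [hkB₁ _ hmem, hecoe, hgagree _ (iter_mem_cl_singleton θ x n)]
    · rw [hkout _ (hclB₁ _ hv) (hclB₂ _ hv), hid _ hv]

/-- Main lemma: 1-ultrahomogeneity implies that every injective equivariant map
on a finitely generated subalgebra extends to an automorphism. -/
lemma main
    (H1 : ∀ x y : A, ∀ f : A → A,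
      IsoOn θ (cl θ {x}) (cl θ {y}) f → ExtendsToAuto θ (cl θ {x}) f)
    (S : Set A) (hS : S.Finite) :
    ∀ f : A → A, Set.InjOn f (cl θ S) → (∀ v ∈ cl θ S, f (θ v) = θ (f v)) →
      ∃ g : A → A, Function.Bijective g ∧ (∀ a, g (θ a) = θ (g a)) ∧
        ∀ v ∈ cl θ S, g v = f v := by
  refine Set.Finite.induction_on (motive := fun S _ => ∀ f : A → A, Set.InjOn f (cl θ S) →
      (∀ v ∈ cl θ S, f (θ v) = θ (f v)) →
      ∃ g : A → A, Function.Bijective g ∧ (∀ a, g (θ a) = θ (g a)) ∧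
        ∀ v ∈ cl θ S, g v = f v) S hS ?_ ?_
  · intro f _ _
    refine ⟨id, Function.bijective_id, fun a => rfl, ?_⟩
    intro v hv
    rw [cl_empty] at hv
    exact absurd hv (Set.notMem_empty v)
  · intro x S₀ hxS₀ hS₀fin ih f hinj hequiv
    have hsub₀ : cl θ S₀ ⊆ cl θ (insert x S₀) := cl_mono (Set.subset_insert x S₀)
    obtain ⟨g₀, hg₀bij, hg₀eq, hg₀agree⟩ :=
      ih f (hinj.mono hsub₀) (fun v hv => hequiv v (hsub₀ hv))
    set e₀ : A ≃ A := Equiv.ofBijective g₀ hg₀bij with he₀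
    have he₀coe : ∀ v, e₀ v = g₀ v := fun v => rfl
    have he₀symm : ∀ v, e₀.symm (θ v) = θ (e₀.symm v) := by
      intro v
      apply e₀.injective
      rw [e₀.apply_symm_apply, he₀coe, hg₀eq,
        show g₀ (e₀.symm v) = v from e₀.apply_symm_apply v]
    set h : A → A := fun v => e₀.symm (f v) with hh
    have hhinj : Set.InjOn h (cl θ (insert x S₀)) :=
      fun a ha b hb hab => hinj ha hb (e₀.symm.injective hab)
    have hheq : ∀ v ∈ cl θ (insert x S₀), h (θ v) = θ (h v) := by
      intro v hv
      rw [hh]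
      simp only
      rw [hequiv v hv, he₀symm]
    have hhid : ∀ v ∈ cl θ S₀, h v = v := by
      intro v hv
      rw [hh]
      simp only
      rw [← hg₀agree v hv, ← he₀coe, e₀.symm_apply_apply]
    obtain ⟨k, hkbij, hkeq, hkagree⟩ := core H1 S₀ x h hhinj hheq hhid
    refine ⟨g₀ ∘ k, hg₀bij.comp hkbij, ?_, ?_⟩
    · intro a
      simp only [Function.comp_apply]
      rw [hkeq, hg₀eq]
    · intro v hv
      simp only [Function.comp_apply]
      rw [hkagree v hv]
      show g₀ (e₀.symm (f v)) = f v
      rw [← he₀coe, e₀.apply_symm_apply]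

end Stmt14

theorem stmt_14 {A : Type*} (θ : A → A) :
    (∀ S T : Set A, S.Finite → T.Finite → ∀ f : A → A,
        IsoOn θ (cl θ S) (cl θ T) f → ExtendsToAuto θ (cl θ S) f)
    ↔ (∀ x y : A, ∀ f : A → A,
        IsoOn θ (cl θ {x}) (cl θ {y}) f → ExtendsToAuto θ (cl θ {x}) f) := by
  constructor
  · intro H x y f hf
    exact H {x} {y} (Set.finite_singleton x) (Set.finite_singleton y) f hf
  · intro H1 S T hS hT f hf
    obtain ⟨g, hgbij, hgeq, hgagree⟩ :=
      Stmt14.main H1 S hS f hf.1.2.1 hf.2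
    exact ⟨g, hgbij, hgeq, hgagree⟩
end

section
/- Let (A, θ) be a connected monounary algebra. Then A is ultrahomogeneous if and only if for all x, y ∈ A, if ht(x) = ht(y) then |θ⁻¹(x)| = |θ⁻¹(y)| (heights and cardinalities possibly infinite). -/
/-! If `ht x = ht y`, then `θ^[n] x ↦ θ^[n] y` is a well-defined isomorphism `cl {x} → cl {y}`:
a connected algebra has at most one cycle, so equal heights force equal eventual periods. An
automorphism extending it maps `θ⁻¹ x` onto `θ⁻¹ y`.

Conversely, an isomorphism `cl S → cl T` is extended layer by layer over the preimages
`θ^[n] ⁻¹' cl S`, which exhaust `A` by connectedness. Going one layer down, the uncovered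
preimages of each `x` must be matched with those of its image, and there are equally many: the
whole fibres have the same size because isomorphisms preserve heights, and the covered parts
correspond. Cardinal subtraction is harmless here: the covered parts are finite in the first layer
(`S` is finite), and in every later layer a point has either all or none of its preimages. -/

open Set Function Cardinal

section

variable {A : Type*} {θ : A → A}

/-- The set of `n` with `θ^[n] x` cyclic is `{n | ht x ≤ n}`, so this says `ht x = ht y`. -/
def SameHeight (θ : A → A) (x y : A) : Prop :=
  ∀ n : ℕ, θ^[n] x ∈ periodicPts θ ↔ θ^[n] y ∈ periodicPts θ

/-- The new preimages that an extension of `g` from `D` to `θ ⁻¹' D` has to match are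
equinumerous. -/
def FibersMatch (θ : A → A) (D D' : Set A) (g : A → A) : Prop :=
  ∀ x ∈ D, #↥(θ ⁻¹' {x} \ D) = #↥(θ ⁻¹' {g x} \ D')

lemma SameHeight.symm {x y : A} (h : SameHeight θ x y) : SameHeight θ y x :=
  fun n => (h n).symm

lemma cl_singleton (x : A) : cl θ {x} = range fun n => θ^[n] x := by
  ext a
  simp [cl]

lemma cl_eq_biUnion (S : Set A) : cl θ S = ⋃ s ∈ S, range fun n => θ^[n] s := by
  ext a
  simp [cl]

lemma mapsTo_cl (S : Set A) : MapsTo θ (cl θ S) (cl θ S) := by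
  rintro _ ⟨s, hs, n, rfl⟩
  exact ⟨s, hs, n + 1, iterate_succ_apply' θ n s⟩

lemma exists_iterate_mem_cl (hconn : ∀ x y : A, ∃ n m : ℕ, θ^[n] x = θ^[m] y) {S : Set A}
    {s : A} (hs : s ∈ S) (a : A) : ∃ n, a ∈ θ^[n] ⁻¹' cl θ S :=
  let ⟨n, m, h⟩ := hconn a s
  ⟨n, s, hs, m, h.symm⟩

section IsoOn

variable {D D' : Set A} {g : A → A}

lemma IsoOn.map_iterate (hD : MapsTo θ D D) (hg : IsoOn θ D D' g) {a : A} (ha : a ∈ D)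
    (n : ℕ) : g (θ^[n] a) = θ^[n] (g a) := by
  induction n generalizing a with
  | zero => rfl
  | succ n ih => rw [iterate_succ_apply, iterate_succ_apply, ih (hD ha), hg.2 a ha]

lemma IsoOn.isPeriodicPt_iff (hD : MapsTo θ D D) (hg : IsoOn θ D D' g) {a : A} (ha : a ∈ D)
    (k : ℕ) : IsPeriodicPt θ k (g a) ↔ IsPeriodicPt θ k a := by
  rw [IsPeriodicPt, IsFixedPt, ← hg.map_iterate hD ha]
  exact hg.1.injOn.eq_iff (hD.iterate k ha) ha

lemma IsoOn.sameHeight (hD : MapsTo θ D D) (hg : IsoOn θ D D' g) {a : A} (ha : a ∈ D) :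
    SameHeight θ a (g a) := by
  intro n
  simp only [← hg.map_iterate hD ha, mem_periodicPts, hg.isPeriodicPt_iff hD (hD.iterate n ha)]

lemma IsoOn.mapsTo_right (hD : MapsTo θ D D) (hg : IsoOn θ D D' g) : MapsTo θ D' D' := by
  intro b hb
  obtain ⟨a, ha, rfl⟩ := hg.1.surjOn hb
  rw [← hg.2 a ha]
  exact hg.1.mapsTo (hD ha)

lemma IsoOn.image_preimage_singleton_inter (hD : MapsTo θ D D) (hg : IsoOn θ D D' g) {x : A}
    (hx : x ∈ D) : g '' (θ ⁻¹' {x} ∩ D) = θ ⁻¹' {g x} ∩ D' := by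
  ext b
  constructor
  · rintro ⟨a, ⟨rfl, ha⟩, rfl⟩
    exact ⟨(hg.2 a ha).symm, hg.1.mapsTo ha⟩
  · rintro ⟨hbx, hb⟩
    obtain ⟨a, ha, rfl⟩ := hg.1.surjOn hb
    have hθa : θ a = x := hg.1.injOn (hD ha) hx ((hg.2 a ha).trans hbx)
    exact ⟨a, ⟨hθa, ha⟩, rfl⟩

end IsoOn

lemma exists_iterate_eq_of_mem_periodicPts (hconn : ∀ x y : A, ∃ n m : ℕ, θ^[n] x = θ^[m] y)
    {v : A} (hv : v ∈ periodicPts θ) (u : A) : ∃ j, θ^[j] u = v := by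
  obtain ⟨a, b, hab⟩ := hconn v u
  obtain ⟨q, hq, hvq⟩ := mem_periodicPts.mp hv
  refine ⟨q * a - a + b, ?_⟩
  rw [iterate_add_apply, ← hab, ← iterate_add_apply,
    Nat.sub_add_cancel (Nat.le_mul_of_pos_left a hq)]
  exact hvq.mul_const a

lemma SameHeight.iterate_eq (hconn : ∀ x y : A, ∃ n m : ℕ, θ^[n] x = θ^[m] y) {x y : A}
    (h : SameHeight θ x y) {n m : ℕ} (he : θ^[n] x = θ^[m] x) : θ^[n] y = θ^[m] y := by
  wlog hnm : n < m generalizing n m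
  · rcases (not_lt.mp hnm).eq_or_lt with rfl | hmn
    · rfl
    · exact (this he.symm hmn).symm
  have hx : IsPeriodicPt θ (m - n) (θ^[n] x) := by
    rw [IsPeriodicPt, IsFixedPt, ← iterate_add_apply, Nat.sub_add_cancel hnm.le, he]
  obtain ⟨j, hj⟩ := exists_iterate_eq_of_mem_periodicPts hconn
    ((h n).mp (mk_mem_periodicPts (Nat.sub_pos_of_lt hnm) hx)) (θ^[n] x)
  have hy : IsPeriodicPt θ (m - n) (θ^[n] y) := hj ▸ hx.apply_iterate j
  calc θ^[n] y = θ^[m - n] (θ^[n] y) := hy.eq.symm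
    _ = θ^[m] y := by rw [← iterate_add_apply, Nat.sub_add_cancel hnm.le]

lemma exists_isoOn_cl_singleton (hconn : ∀ x y : A, ∃ n m : ℕ, θ^[n] x = θ^[m] y) {x y : A}
    (h : SameHeight θ x y) : ∃ f, IsoOn θ (cl θ {x}) (cl θ {y}) f ∧ f x = y := by
  have hxy : FactorsThrough (fun n => θ^[n] y) (fun n => θ^[n] x) :=
    fun _ _ he => h.iterate_eq hconn he
  have hyx : FactorsThrough (fun n => θ^[n] x) (fun n => θ^[n] y) :=
    fun _ _ he => h.symm.iterate_eq hconn he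
  set f := extend (fun n => θ^[n] x) (fun n => θ^[n] y) id
  have hf : ∀ n, f (θ^[n] x) = θ^[n] y := hxy.extend_apply id
  refine ⟨f, ⟨⟨?_, ?_, ?_⟩, ?_⟩, hf 0⟩ <;> simp only [cl_singleton]
  · rintro _ ⟨n, rfl⟩
    exact ⟨n, (hf n).symm⟩
  · rintro _ ⟨n, rfl⟩ _ ⟨m, rfl⟩ he
    rw [hf, hf] at he
    exact hyx he
  · rintro _ ⟨n, rfl⟩
    exact ⟨_, ⟨n, rfl⟩, hf n⟩
  · rintro _ ⟨n, rfl⟩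
    rw [← iterate_succ_apply' θ n x, hf, hf, iterate_succ_apply']

lemma mk_preimage_singleton_apply {g : A → A} (hg : Bijective g)
    (hcomm : ∀ a, g (θ a) = θ (g a)) (x : A) : #↥(θ ⁻¹' {g x}) = #↥(θ ⁻¹' {x}) := by
  have : Equiv.ofBijective g hg ⁻¹' (θ ⁻¹' {g x}) = θ ⁻¹' {x} := by
    ext a
    simp [← hcomm, hg.injective.eq_iff]
  rw [← this, mk_preimage_equiv]

lemma finite_range_iterate_of_not_injective {s : A} (h : ¬Injective fun n => θ^[n] s) :
    (range fun n => θ^[n] s).Finite := by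
  obtain ⟨n, m, he, hne⟩ := not_injective_iff.mp h
  wlog hnm : n < m generalizing n m
  · exact this m n he.symm hne.symm (hne.lt_or_gt.resolve_left hnm)
  have hper : IsPeriodicPt θ (m - n) (θ^[n] s) := by
    rw [IsPeriodicPt, IsFixedPt, ← iterate_add_apply, Nat.sub_add_cancel hnm.le]
    exact he.symm
  refine ((finite_Iio m).image fun k => θ^[k] s).subset ?_
  rintro _ ⟨k, rfl⟩
  rcases lt_or_ge k n with hk | hk
  · exact ⟨k, hk.trans hnm, rfl⟩
  · refine ⟨(k - n) % (m - n) + n, ?_, ?_⟩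
    · have := Nat.mod_lt (k - n) (Nat.sub_pos_of_lt hnm)
      simp only [mem_Iio]
      omega
    · dsimp only
      rw [iterate_add_apply, hper.iterate_mod_apply, ← iterate_add_apply,
        Nat.sub_add_cancel hk]

lemma finite_preimage_singleton_inter_range_iterate (x s : A) :
    (θ ⁻¹' {x} ∩ range fun n => θ^[n] s).Finite := by
  by_cases hinj : Injective fun n => θ^[n] s
  · refine Subsingleton.finite ?_
    rintro _ ⟨ha, n, rfl⟩ _ ⟨hb, m, rfl⟩
    have : θ^[n + 1] s = θ^[m + 1] s := by
      rw [iterate_succ_apply', iterate_succ_apply']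
      exact ha.trans hb.symm
    rw [Nat.succ_injective (hinj this)]
  · exact (finite_range_iterate_of_not_injective hinj).subset inter_subset_right

lemma finite_preimage_singleton_inter_cl {S : Set A} (hS : S.Finite) (x : A) :
    (θ ⁻¹' {x} ∩ cl θ S).Finite := by
  rw [cl_eq_biUnion, inter_iUnion₂]
  exact hS.biUnion fun s _ => finite_preimage_singleton_inter_range_iterate x s

lemma fibersMatch_cl (hcard : ∀ x y, SameHeight θ x y → #↥(θ ⁻¹' {x}) = #↥(θ ⁻¹' {y}))
    {S T : Set A} (hS : S.Finite) {f : A → A} (hf : IsoOn θ (cl θ S) (cl θ T) f) :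
    FibersMatch θ (cl θ S) (cl θ T) f := by
  intro x hx
  have hsplit (P C : Set A) : #↥(P \ C) + #↥(P ∩ C) = #P := by
    rw [← sdiff_self_inter]
    exact mk_sdiff_add_mk inter_subset_left
  have hcovered : #↥(θ ⁻¹' {f x} ∩ cl θ T) = #↥(θ ⁻¹' {x} ∩ cl θ S) := by
    rw [← hf.image_preimage_singleton_inter (mapsTo_cl S) hx]
    exact mk_image_eq_of_injOn _ _ (hf.1.injOn.mono inter_subset_right)
  rw [← add_right_inj_of_lt_aleph0 (finite_preimage_singleton_inter_cl hS x).lt_aleph0, hsplit,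
    ← hcovered, hsplit]
  exact hcard _ _ (hf.sameHeight (mapsTo_cl S) hx)

lemma exists_bijOn_of_mk_eq {s t : Set A} (h : #s = #t) : ∃ f : A → A, BijOn f s t := by
  classical
  obtain ⟨e⟩ := Cardinal.eq.mp h
  refine ⟨fun a => if ha : a ∈ s then e ⟨a, ha⟩ else a, fun a ha => by simp [ha],
    fun a ha b hb hab => ?_, fun b hb => ⟨e.symm ⟨b, hb⟩, (e.symm _).2, by simp⟩⟩
  simp only [ha, hb, dite_true] at hab
  simpa using e.injective (Subtype.ext hab)

section Extension

variable {D D' : Set A} {g : A → A}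

lemma exists_bijOn_preimage_sdiff (hg : BijOn g D D') (hfib : FibersMatch θ D D' g) :
    ∃ h : A → A, BijOn h (θ ⁻¹' D \ D) (θ ⁻¹' D' \ D') ∧
      ∀ a ∈ θ ⁻¹' D \ D, θ (h a) = g (θ a) := by
  choose! β hβ using fun x (hx : x ∈ D) => exists_bijOn_of_mk_eq (hfib x hx)
  have hmaps : ∀ a ∈ θ ⁻¹' D \ D, θ (β (θ a) a) = g (θ a) ∧ β (θ a) a ∉ D' :=
    fun a ha => (hβ _ ha.1).mapsTo ⟨rfl, ha.2⟩
  refine ⟨fun a => β (θ a) a, ⟨fun a ha => ?_, fun a ha b hb hab => ?_, fun b hb => ?_⟩,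
    fun a ha => (hmaps a ha).1⟩
  · refine ⟨?_, (hmaps a ha).2⟩
    show θ (β (θ a) a) ∈ D'
    rw [(hmaps a ha).1]
    exact hg.mapsTo ha.1
  · have hθ : θ a = θ b := hg.injOn ha.1 hb.1 <| by
      rw [← (hmaps a ha).1, ← (hmaps b hb).1]
      exact congrArg θ hab
    exact (hβ _ hb.1).injOn ⟨hθ, ha.2⟩ ⟨rfl, hb.2⟩ (by simpa only [hθ] using hab)
  · obtain ⟨x, hx, hgx⟩ := hg.surjOn hb.1
    obtain ⟨a, ⟨hax, haD⟩, rfl⟩ := (hβ x hx).surjOn ⟨hgx.symm, hb.2⟩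
    refine ⟨a, ⟨show θ a ∈ D by rw [hax]; exact hx, haD⟩, ?_⟩
    simp only [show θ a = x from hax]

lemma IsoOn.fibersMatch_preimage
    (hcard : ∀ x y, SameHeight θ x y → #↥(θ ⁻¹' {x}) = #↥(θ ⁻¹' {y})) (hD : MapsTo θ D D)
    (hg : BijOn g D D') {g' : A → A} (hg' : IsoOn θ (θ ⁻¹' D) (θ ⁻¹' D') g')
    (hext : EqOn g' g D) : FibersMatch θ (θ ⁻¹' D) (θ ⁻¹' D') g' := by
  intro x hx
  simp only [← preimage_sdiff]
  by_cases hxD : x ∈ D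
  · rw [sdiff_eq_empty.mpr (singleton_subset_iff.mpr hxD),
      sdiff_eq_empty.mpr (singleton_subset_iff.mpr (hext hxD ▸ hg.mapsTo hxD))]
  · have hgx : g' x ∉ D' := by
      intro hgx
      obtain ⟨y, hy, hyx⟩ := hg.surjOn hgx
      exact hxD (hg'.1.injOn (hD hy) hx ((hext hy).trans hyx) ▸ hy)
    rw [sdiff_eq_left.mpr (disjoint_singleton_left.mpr hxD),
      sdiff_eq_left.mpr (disjoint_singleton_left.mpr hgx)]
    exact hcard _ _ (hg'.sameHeight ((Function.Commute.refl θ).mapsTo_preimage hD) hx)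

lemma IsoOn.exists_extend_preimage
    (hcard : ∀ x y, SameHeight θ x y → #↥(θ ⁻¹' {x}) = #↥(θ ⁻¹' {y})) (hD : MapsTo θ D D)
    (hg : IsoOn θ D D' g) (hfib : FibersMatch θ D D' g) :
    ∃ g', (IsoOn θ (θ ⁻¹' D) (θ ⁻¹' D') g' ∧ FibersMatch θ (θ ⁻¹' D) (θ ⁻¹' D') g') ∧
      EqOn g' g D := by
  classical
  obtain ⟨h, hh, hθh⟩ := exists_bijOn_preimage_sdiff hg.1 hfib
  have hg' : IsoOn θ (θ ⁻¹' D) (θ ⁻¹' D') (D.piecewise g h) := by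
    refine ⟨?_, fun a ha => ?_⟩
    · rw [← union_sdiff_cancel hD.subset_preimage,
        ← union_sdiff_cancel (hg.mapsTo_right hD).subset_preimage]
      refine (hg.1.congr (D.piecewise_eqOn g h).symm).union
        (hh.congr fun a ha => (piecewise_eq_of_notMem _ _ _ ha.2).symm) ?_
      refine (injOn_union disjoint_sdiff_right).mpr ⟨?_, ?_, fun a ha b hb hab => ?_⟩
      · exact hg.1.injOn.congr (D.piecewise_eqOn g h).symm
      · exact hh.injOn.congr fun a ha => (piecewise_eq_of_notMem _ _ _ ha.2).symm
      · rw [piecewise_eq_of_mem _ _ _ ha, piecewise_eq_of_notMem _ _ _ hb.2] at hab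
        exact (hh.mapsTo hb).2 (hab ▸ hg.1.mapsTo ha)
    · rw [piecewise_eq_of_mem _ _ _ (show θ a ∈ D from ha)]
      by_cases haD : a ∈ D
      · rw [piecewise_eq_of_mem _ _ _ haD, hg.2 a haD]
      · rw [piecewise_eq_of_notMem _ _ _ haD, hθh a ⟨ha, haD⟩]
  exact ⟨_, ⟨hg', hg'.fibersMatch_preimage hcard hD hg.1 (D.piecewise_eqOn g h)⟩,
    D.piecewise_eqOn g h⟩

end Extension

lemma exists_seq_of_step {α : Type*} (P : ℕ → α → Prop) (R : ℕ → α → α → Prop) {a₀ : α}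
    (h₀ : P 0 a₀) (hstep : ∀ n a, P n a → ∃ b, P (n + 1) b ∧ R n b a) :
    ∃ G : ℕ → α, G 0 = a₀ ∧ ∀ n, P n (G n) ∧ R n (G (n + 1)) (G n) := by
  choose! F hF using hstep
  let G : ℕ → α := fun n => Nat.rec a₀ F n
  have hP : ∀ n, P n (G n) := by
    intro n
    induction n with
    | zero => exact h₀
    | succ n ih => exact (hF n _ ih).1
  exact ⟨G, rfl, fun n => ⟨hP n, (hF n _ (hP n)).2⟩⟩

lemma exists_bijective_of_isoOn_seq {D E : ℕ → Set A} (hD : Monotone D)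
    (hDcov : ∀ a, ∃ n, a ∈ D n) (hEcov : ∀ b, ∃ n, b ∈ E n) {G : ℕ → A → A}
    (hG : ∀ n, IsoOn θ (D n) (E n) (G n)) (hcompat : ∀ n, EqOn (G (n + 1)) (G n) (D n)) :
    ∃ g, Bijective g ∧ (∀ a, g (θ a) = θ (g a)) ∧ EqOn g (G 0) (D 0) := by
  have hcompat' : ∀ m n, m ≤ n → EqOn (G n) (G m) (D m) := by
    intro m n hmn
    induction hmn with
    | refl => exact eqOn_refl _ _
    | step hmn ih => exact ((hcompat _).mono (hD hmn)).trans ih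
  choose N hN using hDcov
  have hg : ∀ n, EqOn (fun a => G (N a) a) (G n) (D n) := fun n a ha => by
    rcases le_total (N a) n with h | h
    · exact (hcompat' _ _ h (hN a)).symm
    · exact hcompat' _ _ h ha
  have hcommon : ∀ a b, ∃ n, a ∈ D n ∧ b ∈ D n := fun a b =>
    ⟨max (N a) (N b), hD (le_max_left _ _) (hN a), hD (le_max_right _ _) (hN b)⟩
  refine ⟨fun a => G (N a) a, ⟨fun a b hab => ?_, fun b => ?_⟩, fun a => ?_, hg 0⟩
  · obtain ⟨n, ha, hb⟩ := hcommon a b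
    exact (hG n).1.injOn ha hb (by rwa [← hg n ha, ← hg n hb])
  · obtain ⟨n, hb⟩ := hEcov b
    obtain ⟨a, ha, rfl⟩ := (hG n).1.surjOn hb
    exact ⟨a, hg n ha⟩
  · obtain ⟨n, ha, hθa⟩ := hcommon a (θ a)
    rw [hg n hθa, hg n ha, (hG n).2 a ha]

lemma extendsToAuto_of_fibers (hconn : ∀ x y : A, ∃ n m : ℕ, θ^[n] x = θ^[m] y)
    (hcard : ∀ x y, SameHeight θ x y → #↥(θ ⁻¹' {x}) = #↥(θ ⁻¹' {y})) {S T : Set A}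
    (hS : S.Finite) {f : A → A} (hf : IsoOn θ (cl θ S) (cl θ T) f) :
    ExtendsToAuto θ (cl θ S) f := by
  rcases S.eq_empty_or_nonempty with rfl | ⟨s, hs⟩
  · exact ⟨id, bijective_id, fun _ => rfl, fun a ⟨_, h, _⟩ => absurd h (notMem_empty _)⟩
  obtain ⟨t, ht, -⟩ := hf.1.mapsTo ⟨s, hs, 0, rfl⟩
  have hlayer (C : Set A) (n : ℕ) : θ ⁻¹' (θ^[n] ⁻¹' C) = θ^[n + 1] ⁻¹' C := by
    rw [iterate_succ, preimage_comp]
  obtain ⟨G, rfl, hG⟩ := exists_seq_of_step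
    (fun n g => IsoOn θ (θ^[n] ⁻¹' cl θ S) (θ^[n] ⁻¹' cl θ T) g ∧
      FibersMatch θ (θ^[n] ⁻¹' cl θ S) (θ^[n] ⁻¹' cl θ T) g)
    (fun n g' g => EqOn g' g (θ^[n] ⁻¹' cl θ S)) ⟨hf, fibersMatch_cl hcard hS hf⟩
    fun n g hg => by
      simpa only [hlayer] using hg.1.exists_extend_preimage hcard
        ((Commute.iterate_self θ n).mapsTo_preimage (mapsTo_cl S)) hg.2
  have hmono : Monotone fun n => θ^[n] ⁻¹' cl θ S := monotone_nat_of_le_succ fun n a ha => by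
    rw [mem_preimage, iterate_succ_apply']
    exact mapsTo_cl S ha
  obtain ⟨g, hg, hcomm, hgf⟩ := exists_bijective_of_isoOn_seq hmono
    (exists_iterate_mem_cl hconn hs) (exists_iterate_mem_cl hconn ht) (fun n => (hG n).1.1)
    fun n => (hG n).2
  exact ⟨g, hg, hcomm, fun a ha => hgf ha⟩

end

theorem stmt_16 {A : Type*} (θ : A → A)
    (hconn : ∀ x y : A, ∃ n m : ℕ, θ^[n] x = θ^[m] y) :
    (∀ S T : Set A, S.Finite → T.Finite → ∀ f : A → A,
        IsoOn θ (cl θ S) (cl θ T) f → ExtendsToAuto θ (cl θ S) f)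
    ↔ ∀ x y : A,
        (∀ n : ℕ, (∃ k ≥ 1, θ^[k] (θ^[n] x) = θ^[n] x) ↔
          (∃ k ≥ 1, θ^[k] (θ^[n] y) = θ^[n] y)) →
        Cardinal.mk {a | θ a = x} = Cardinal.mk {a | θ a = y} := by
  constructor
  · intro hU x y h
    obtain ⟨f, hf, rfl⟩ := exists_isoOn_cl_singleton hconn h
    obtain ⟨g, hg, hcomm, hgf⟩ := hU {x} {f x} (finite_singleton x) (finite_singleton _) f hf
    rw [← hgf x ⟨x, rfl, 0, rfl⟩]
    exact (mk_preimage_singleton_apply hg hcomm x).symm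
  · exact fun hcard S T hS _ f hf => extendsToAuto_of_fibers hconn hcard hS hf
end

section
/- A monounary algebra (A, θ) is ultrahomogeneous if and only if: (a) every connected component of A is ultrahomogeneous, and (b) whenever B, B′ are connected components with |cyc(B)| = |cyc(B′)|, then B ≅ B′ as monounary algebras. -/
/-- The connected component of `x`. -/
def comp {A : Type*} (θ : A → A) (x : A) : Set A :=
  {y | ∃ n m : ℕ, θ^[n] x = θ^[m] y}

/-- The component `C` is ultrahomogeneous as a monounary algebra in its own right. -/
def UHOn {A : Type*} (θ : A → A) (C : Set A) : Prop :=
  ∀ S T : Set A, S.Finite → T.Finite → S ⊆ C → T ⊆ C → ∀ f : A → A,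
    IsoOn θ (cl θ S) (cl θ T) f →
      ∃ g : A → A, Set.BijOn g C C ∧ (∀ a ∈ C, g (θ a) = θ (g a)) ∧
        ∀ a ∈ cl θ S, g a = f a

/-
An automorphism permutes the connected components. Restricting automorphisms therefore gives
ultrahomogeneity of each component, and extending the isomorphism `θⁿ z ↦ θⁿ w` between the
subalgebras generated by two points of the same orbit type (on cycles of equal length, or in
acyclic components) gives isomorphisms between components with equally large cycles.

Conversely, let `f` be an isomorphism between finitely generated subalgebras. The subalgebra
contains the whole cycle of every component it meets, so `f` induces a finite partial bijection of
components that preserves `|cyc|`. Extend it to a `|cyc|`-preserving permutation `Φ` of all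
components. On each component `C`, take an isomorphism `C → Φ C` and use the ultrahomogeneity of
`C` to correct it until it agrees with `f`. Gluing these maps gives the automorphism.
-/

open Function hiding comp
open Set Cardinal

namespace Monounary

variable {A : Type*} {θ : A → A}

def Ultrahomogeneous (θ : A → A) : Prop :=
  ∀ S T : Set A, S.Finite → T.Finite → ∀ f : A → A,
    IsoOn θ (cl θ S) (cl θ T) f → ExtendsToAuto θ (cl θ S) f

theorem iterate_map_of_commOn {B : Set A} {f : A → A} (hB : MapsTo θ B B)
    (hf : ∀ a ∈ B, f (θ a) = θ (f a)) (n : ℕ) {a : A} (ha : a ∈ B) :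
    f (θ^[n] a) = θ^[n] (f a) := by
  induction n generalizing a with
  | zero => rfl
  | succ n ih => rw [iterate_succ_apply, iterate_succ_apply, ih (hB ha), hf a ha]

section Closure

theorem subset_cl (S : Set A) : S ⊆ cl θ S := fun s hs => ⟨s, hs, 0, rfl⟩

theorem cl_mono {S T : Set A} (h : S ⊆ T) : cl θ S ⊆ cl θ T := by
  rintro _ ⟨s, hs, n, rfl⟩
  exact ⟨s, h hs, n, rfl⟩

theorem mapsTo_cl (S : Set A) : MapsTo θ (cl θ S) (cl θ S) := by
  rintro _ ⟨s, hs, n, rfl⟩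
  exact ⟨s, hs, n + 1, iterate_succ_apply' θ n s⟩

theorem cl_subset {S C : Set A} (hC : MapsTo θ C C) (hS : S ⊆ C) : cl θ S ⊆ C := by
  rintro _ ⟨s, hs, n, rfl⟩
  exact hC.iterate n (hS hs)

theorem cl_singleton (z : A) : cl θ {z} = range (θ^[·] z) := by
  ext a
  simp [cl]

theorem image_cl {S : Set A} {f : A → A} (hf : ∀ a ∈ cl θ S, f (θ a) = θ (f a)) :
    f '' cl θ S = cl θ (f '' S) := by
  have key n {s} (hs : s ∈ S) := iterate_map_of_commOn (mapsTo_cl S) hf n (subset_cl S hs)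
  ext b
  constructor
  · rintro ⟨_, ⟨s, hs, n, rfl⟩, rfl⟩
    exact ⟨f s, mem_image_of_mem f hs, n, (key n hs).symm⟩
  · rintro ⟨_, ⟨s, hs, rfl⟩, n, rfl⟩
    exact ⟨θ^[n] s, ⟨s, hs, n, rfl⟩, key n hs⟩

end Closure

section Components

theorem mem_comp_self (x : A) : x ∈ comp θ x := ⟨0, 0, rfl⟩

theorem iterate_mem_comp (x : A) (n : ℕ) : θ^[n] x ∈ comp θ x := ⟨n, 0, rfl⟩

theorem mem_comp_symm {x y : A} (h : y ∈ comp θ x) : x ∈ comp θ y := by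
  obtain ⟨n, m, e⟩ := h
  exact ⟨m, n, e.symm⟩

theorem mem_comp_trans {x y z : A} (hy : y ∈ comp θ x) (hz : z ∈ comp θ y) : z ∈ comp θ x := by
  obtain ⟨n, m, e⟩ := hy
  obtain ⟨p, q, e'⟩ := hz
  refine ⟨p + n, m + q, ?_⟩
  rw [iterate_add_apply, e, ← iterate_add_apply, add_comm, iterate_add_apply, e',
    ← iterate_add_apply]

theorem comp_eq_of_mem {x y : A} (h : y ∈ comp θ x) : comp θ y = comp θ x :=
  Set.ext fun _ => ⟨mem_comp_trans h, mem_comp_trans (mem_comp_symm h)⟩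

theorem mapsTo_comp (x : A) : MapsTo θ (comp θ x) (comp θ x) :=
  fun y hy => mem_comp_trans hy (iterate_mem_comp y 1)

theorem cl_inter_comp_subset (S : Set A) (x : A) :
    cl θ S ∩ comp θ x ⊆ cl θ (S ∩ comp θ x) := by
  rintro _ ⟨⟨s, hs, n, rfl⟩, hx⟩
  exact ⟨s, ⟨hs, mem_comp_trans hx (mem_comp_symm (iterate_mem_comp s n))⟩, n, rfl⟩

def compSetoid (θ : A → A) : Setoid A where
  r x y := y ∈ comp θ x
  iseqv := ⟨mem_comp_self, mem_comp_symm, mem_comp_trans⟩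

theorem mk_eq_mk_iff {a b : A} :
    Quotient.mk (compSetoid θ) a = Quotient.mk _ b ↔ b ∈ comp θ a :=
  Quotient.eq

theorem preimage_mk_singleton_mk (x : A) :
    Quotient.mk (compSetoid θ) ⁻¹' {Quotient.mk (compSetoid θ) x} = comp θ x :=
  Set.ext fun _ => mk_eq_mk_iff.trans ⟨mem_comp_symm, mem_comp_symm⟩

end Components

section Homomorphisms

variable {B : Set A} {f : A → A}

theorem apply_mem_comp_apply_iff (hB : MapsTo θ B B) (hinj : InjOn f B)
    (hf : ∀ a ∈ B, f (θ a) = θ (f a)) {a b : A} (ha : a ∈ B) (hb : b ∈ B) :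
    f b ∈ comp θ (f a) ↔ b ∈ comp θ a := by
  simp only [comp, mem_ofPred_eq, ← iterate_map_of_commOn hB hf _ ha,
    ← iterate_map_of_commOn hB hf _ hb]
  exact exists₂_congr fun n m => hinj.eq_iff (hB.iterate n ha) (hB.iterate m hb)

theorem apply_mem_periodicPts_iff (hB : MapsTo θ B B) (hinj : InjOn f B)
    (hf : ∀ a ∈ B, f (θ a) = θ (f a)) {a : A} (ha : a ∈ B) :
    f a ∈ periodicPts θ ↔ a ∈ periodicPts θ := by
  simp only [mem_periodicPts, IsPeriodicPt, IsFixedPt, ← iterate_map_of_commOn hB hf _ ha]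
  exact exists_congr fun n => and_congr_right fun _ => hinj.eq_iff (hB.iterate n ha) ha

theorem bijOn_comp_of_bijective (hg : Bijective f) (hf : ∀ a, f (θ a) = θ (f a)) (x : A) :
    BijOn f (comp θ x) (comp θ (f x)) := by
  have key a b := apply_mem_comp_apply_iff (mapsTo_univ θ univ) hg.1.injOn (fun a _ => hf a)
    (mem_univ a) (mem_univ b)
  refine ⟨fun b hb => (key x b).2 hb, hg.1.injOn, fun c hc => ?_⟩
  obtain ⟨b, rfl⟩ := hg.2 c
  exact ⟨b, (key x b).1 hc, rfl⟩

theorem IsoOn.invFunOn [Nonempty A] {B' : Set A} (hf : IsoOn θ B B' f) (hB : MapsTo θ B B) :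
    IsoOn θ B' B (Function.invFunOn f B) := by
  have hinv := hf.1.invOn_invFunOn
  refine ⟨hf.1.symm hinv.symm, fun b hb => ?_⟩
  obtain ⟨a, ha, rfl⟩ := hf.1.surjOn hb
  rw [← hf.2 a ha, hinv.1 (hB ha), hinv.1 ha]

end Homomorphisms

section Cycles

theorem exists_iterate_eq_of_mem_periodicPts {u v : A} (hu : u ∈ periodicPts θ)
    (h : u ∈ comp θ v) : ∃ c, θ^[c] v = u := by
  obtain ⟨p, hp, hpu⟩ := hu
  obtain ⟨n, m, e⟩ := h
  have hm : m ≤ p * m := Nat.le_mul_of_pos_left m hp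
  -- `θ^[p * m - m]` undoes `θ^[m]` on the `p`-periodic point `u`
  refine ⟨p * m - m + n, ?_⟩
  rw [iterate_add_apply, e, ← iterate_add_apply, Nat.sub_add_cancel hm]
  exact (hpu.mul_const m).eq

theorem periodicPts_inter_comp_eq {z : A} (hz : z ∈ periodicPts θ) :
    periodicPts θ ∩ comp θ z = (θ^[·] z) '' Iio (minimalPeriod θ z) := by
  ext u
  constructor
  · rintro ⟨hu, hzu⟩
    obtain ⟨c, rfl⟩ := exists_iterate_eq_of_mem_periodicPts hu hzu
    exact ⟨c % minimalPeriod θ z, Nat.mod_lt c (minimalPeriod_pos_of_mem_periodicPts hz),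
      iterate_mod_minimalPeriod_eq⟩
  · rintro ⟨i, -, rfl⟩
    exact ⟨⟨_, minimalPeriod_pos_of_mem_periodicPts hz,
      (isPeriodicPt_minimalPeriod θ z).apply_iterate i⟩, iterate_mem_comp z i⟩

theorem mk_periodicPts_inter_comp {z : A} (hz : z ∈ periodicPts θ) :
    #(periodicPts θ ∩ comp θ z : Set A) = minimalPeriod θ z := by
  rw [periodicPts_inter_comp_eq hz, ← lift_uzero #_,
    mk_image_eq_of_injOn_lift _ _ iterate_injOn_Iio_minimalPeriod]
  simp

theorem iterate_eq_iterate_iff_mod_eq {z : A} (hz : z ∈ periodicPts θ) (n m : ℕ) :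
    θ^[n] z = θ^[m] z ↔ n % minimalPeriod θ z = m % minimalPeriod θ z := by
  have hp := minimalPeriod_pos_of_mem_periodicPts hz
  rw [← iterate_mod_minimalPeriod_eq (n := n), ← iterate_mod_minimalPeriod_eq (n := m)]
  exact iterate_eq_iterate_iff_of_lt_minimalPeriod (Nat.mod_lt n hp) (Nat.mod_lt m hp)

theorem iterate_injective_of_periodicPts_inter_comp_eq_empty {x : A}
    (h : periodicPts θ ∩ comp θ x = ∅) : Injective (θ^[·] x) := by
  intro n m e
  by_contra hne
  wlog hlt : n < m generalizing n m
  · exact this e.symm (Ne.symm hne) (by omega)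
  refine h.subset ⟨⟨m - n, Nat.sub_pos_of_lt hlt, ?_⟩, iterate_mem_comp x n⟩
  simp only [IsPeriodicPt, IsFixedPt, ← iterate_add_apply, Nat.sub_add_cancel hlt.le]
  exact e.symm

theorem mk_periodicPts_inter_comp_apply {B : Set A} {f : A → A} (hB : MapsTo θ B B)
    (hinj : InjOn f B) (hf : ∀ a ∈ B, f (θ a) = θ (f a)) {s : A} (hs : s ∈ B) :
    #(periodicPts θ ∩ comp θ (f s) : Set A) = #(periodicPts θ ∩ comp θ s : Set A) := by
  have hper {a} (ha : a ∈ B) := apply_mem_periodicPts_iff hB hinj hf ha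
  have hcomp {b} (hb : b ∈ B) := apply_mem_comp_apply_iff hB hinj hf hs hb
  have hmem {u} (hu : u ∈ periodicPts θ ∩ comp θ s) : u ∈ B := by
    obtain ⟨c, rfl⟩ := exists_iterate_eq_of_mem_periodicPts hu.1 hu.2
    exact hB.iterate c hs
  refine (mk_congr (BijOn.equiv f ⟨fun u hu => ?_, hinj.mono fun u => hmem, ?_⟩)).symm
  · exact ⟨(hper (hmem hu)).2 hu.1, (hcomp (hmem hu)).2 hu.2⟩
  · rintro u' ⟨hu', hsu'⟩
    obtain ⟨c, rfl⟩ := exists_iterate_eq_of_mem_periodicPts hu' hsu'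
    have hc : θ^[c] s ∈ B := hB.iterate c hs
    rw [← iterate_map_of_commOn hB hf c hs] at hu' ⊢
    exact ⟨θ^[c] s, ⟨(hper hc).1 hu', iterate_mem_comp s c⟩, rfl⟩

end Cycles

section Forward

theorem exists_isoOn_cl_singleton {z w : A}
    (h : ∀ n m : ℕ, θ^[n] z = θ^[m] z ↔ θ^[n] w = θ^[m] w) :
    ∃ f : A → A, IsoOn θ (cl θ {z}) (cl θ {w}) f ∧ f z = w := by
  set f := extend (θ^[·] z) (θ^[·] w) id
  have hf (n : ℕ) : f (θ^[n] z) = θ^[n] w :=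
    FactorsThrough.extend_apply (fun n m e => (h n m).1 e) id n
  rw [cl_singleton, cl_singleton]
  refine ⟨f, ⟨⟨?_, ?_, ?_⟩, ?_⟩, hf 0⟩
  · rintro _ ⟨n, rfl⟩
    exact ⟨n, (hf n).symm⟩
  · rintro _ ⟨n, rfl⟩ _ ⟨m, rfl⟩ e
    rw [hf, hf] at e
    exact (h n m).2 e
  · rintro _ ⟨n, rfl⟩
    exact ⟨_, ⟨n, rfl⟩, hf n⟩
  · rintro _ ⟨n, rfl⟩
    rw [← iterate_succ_apply' θ n z, hf, hf, iterate_succ_apply']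

theorem exists_iterate_eq_iff_of_mk_eq {x y : A}
    (h : #(periodicPts θ ∩ comp θ x : Set A) = #(periodicPts θ ∩ comp θ y : Set A)) :
    ∃ z ∈ comp θ x, ∃ w ∈ comp θ y, ∀ n m : ℕ, θ^[n] z = θ^[m] z ↔ θ^[n] w = θ^[m] w := by
  rcases (periodicPts θ ∩ comp θ x).eq_empty_or_nonempty with hx | ⟨z, hz, hxz⟩
  · have hy : periodicPts θ ∩ comp θ y = ∅ := by
      rwa [← mk_set_eq_zero_iff, ← h, mk_set_eq_zero_iff]
    exact ⟨x, mem_comp_self x, y, mem_comp_self y, fun n m =>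
      (iterate_injective_of_periodicPts_inter_comp_eq_empty hx).eq_iff.trans
        (iterate_injective_of_periodicPts_inter_comp_eq_empty hy).eq_iff.symm⟩
  · obtain ⟨w, hw, hyw⟩ : (periodicPts θ ∩ comp θ y).Nonempty := by
      rw [← nonempty_coe_sort, ← mk_ne_zero_iff, ← h, mk_ne_zero_iff]
      exact ⟨⟨z, hz, hxz⟩⟩
    rw [← comp_eq_of_mem hxz, ← comp_eq_of_mem hyw, mk_periodicPts_inter_comp hz,
      mk_periodicPts_inter_comp hw, Nat.cast_inj] at h
    refine ⟨z, hxz, w, hyw, fun n m => ?_⟩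
    rw [iterate_eq_iterate_iff_mod_eq hz, iterate_eq_iterate_iff_mod_eq hw, h]

theorem Ultrahomogeneous.uhOn_comp (H : Ultrahomogeneous θ) (x : A) : UHOn θ (comp θ x) := by
  intro S T hS hT hSx hTx f hf
  rcases S.eq_empty_or_nonempty with rfl | ⟨s, hs⟩
  · exact ⟨id, bijOn_id _, fun _ _ => rfl, fun _ ⟨_, hs, _⟩ => absurd hs (notMem_empty _)⟩
  obtain ⟨g, hg, hgθ, hgf⟩ := H S T hS hT f hf
  have hgs : g s ∈ comp θ x := by
    rw [hgf s (subset_cl S hs)]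
    exact cl_subset (mapsTo_comp x) hTx (hf.1.mapsTo (subset_cl S hs))
  have hbij := bijOn_comp_of_bijective hg hgθ s
  rw [comp_eq_of_mem (hSx hs), comp_eq_of_mem hgs] at hbij
  exact ⟨g, hbij, fun a _ => hgθ a, hgf⟩

theorem Ultrahomogeneous.exists_isoOn_comp (H : Ultrahomogeneous θ) {x y : A}
    (h : #(periodicPts θ ∩ comp θ x : Set A) = #(periodicPts θ ∩ comp θ y : Set A)) :
    ∃ f : A → A, IsoOn θ (comp θ x) (comp θ y) f := by
  obtain ⟨z, hxz, w, hyw, hzw⟩ := exists_iterate_eq_iff_of_mk_eq h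
  obtain ⟨f, hf, hfz⟩ := exists_isoOn_cl_singleton hzw
  obtain ⟨g, hg, hgθ, hgf⟩ := H {z} {w} (finite_singleton z) (finite_singleton w) f hf
  have hbij := bijOn_comp_of_bijective hg hgθ z
  rw [hgf z (subset_cl _ rfl), hfz, comp_eq_of_mem hxz, comp_eq_of_mem hyw] at hbij
  exact ⟨g, hbij, fun a _ => hgθ a⟩

end Forward

section Backward

theorem exists_perm_extend {α : Type*} {s : Set α} (hs : s.Finite) (f : s ↪ α) :
    ∃ g : Equiv.Perm α, ∀ x : s, g x = f x := by
  rcases finite_or_infinite α with hα | hα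
  · exact extend_function_finite f ⟨Equiv.refl α⟩
  · exact extend_function_of_lt f (hs.lt_aleph0.trans_le (aleph0_le_mk α)) ⟨Equiv.refl α⟩

theorem exists_perm_extend_of_fiberwise {Q ι : Type*} (ν : Q → ι) {s : Set Q} (hs : s.Finite)
    {φ : Q → Q} (hinj : InjOn φ s) (hν : ∀ q ∈ s, ν (φ q) = ν q) :
    ∃ Φ : Equiv.Perm Q, (∀ q, ν (Φ q) = ν q) ∧ ∀ q ∈ s, Φ q = φ q := by
  have (c : ι) : ∃ g : Equiv.Perm {q // ν q = c}, ∀ q : (Subtype.val ⁻¹' s : Set _),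
      g q.1 = ⟨φ q.1.1, (hν _ q.2).trans q.1.2⟩ :=
    exists_perm_extend (hs.preimage Subtype.val_injective.injOn)
      ⟨fun q => ⟨φ q.1.1, (hν _ q.2).trans q.1.2⟩,
        fun q q' e => Subtype.ext (Subtype.ext (hinj q.2 q'.2 (congrArg Subtype.val e)))⟩
  choose E hE using this
  -- `Φ` acts on the fibre `ν ⁻¹' {c}` by `E c`
  exact ⟨(Equiv.sigmaFiberEquiv ν).symm.trans
      ((Equiv.sigmaCongrRight E).trans (Equiv.sigmaFiberEquiv ν)),
    fun q => (E (ν q) ⟨q, rfl⟩).2, fun q hq => congrArg Subtype.val (hE (ν q) ⟨⟨q, rfl⟩, hq⟩)⟩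

theorem bijective_of_bijOn_fibers {α β Q R : Type*} {p : α → Q} {p' : β → R} (Φ : Q ≃ R)
    {g : Q → α → β} (hg : ∀ q, BijOn (g q) (p ⁻¹' {q}) (p' ⁻¹' {Φ q})) :
    Bijective fun a => g (p a) a := by
  have hp (a : α) : p' (g (p a) a) = Φ (p a) := (hg (p a)).mapsTo rfl
  refine ⟨fun a b e => ?_, fun c => ?_⟩
  · have hab : p a = p b := Φ.injective (by rw [← hp, ← hp]; exact congrArg p' e)
    simp only [← hab] at e
    exact (hg (p a)).injOn rfl hab.symm e
  · obtain ⟨a, ha, hac⟩ := (hg (Φ.symm (p' c))).surjOn (Φ.apply_symm_apply (p' c)).symm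
    refine ⟨a, ?_⟩
    show g (p a) a = c
    rw [show p a = _ from ha, hac]

theorem exists_isoOn_extend_of_uhOn {C D S : Set A} (hU : UHOn θ C) (hC : MapsTo θ C C)
    (hD : MapsTo θ D D) {h : A → A} (hh : IsoOn θ C D h) (hS : S.Finite) (hSC : S ⊆ C)
    {f : A → A} (hinj : InjOn f (cl θ S)) (hf : ∀ a ∈ cl θ S, f (θ a) = θ (f a))
    (hfS : f '' S ⊆ D) : ∃ g : A → A, IsoOn θ C D g ∧ ∀ a ∈ cl θ S, g a = f a := by
  rcases isEmpty_or_nonempty A with hA | hA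
  · exact ⟨h, hh, fun a => isEmptyElim a⟩
  set k := invFunOn h C
  have hk : IsoOn θ D C k := IsoOn.invFunOn hh hC
  have hfD : f '' cl θ S ⊆ D := by
    rw [image_cl hf]
    exact cl_subset hD hfS
  have hkf : ∀ b ∈ cl θ (f '' S), k (θ b) = θ (k b) := fun b hb => hk.2 b (cl_subset hD hfS hb)
  have hiso : IsoOn θ (cl θ S) (cl θ (k '' (f '' S))) (k ∘ f) := by
    refine ⟨?_, fun a ha => ?_⟩
    · rw [← image_cl hkf, ← image_cl hf, ← image_comp]
      exact (hk.1.injOn.comp hinj fun a ha => hfD ⟨a, ha, rfl⟩).bijOn_image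
    · rw [comp_apply, comp_apply, hf a ha, hk.2 _ (hfD ⟨a, ha, rfl⟩)]
  obtain ⟨g, hg, hgθ, hgf⟩ := hU S _ hS ((hS.image f).image k) hSC
    (by rintro _ ⟨b, hb, rfl⟩; exact hk.1.mapsTo (hfS hb)) (k ∘ f) hiso
  refine ⟨h ∘ g, ⟨hh.1.comp hg, fun a ha => ?_⟩, fun a ha => ?_⟩
  · rw [comp_apply, comp_apply, hgθ a ha, hh.2 _ (hg.mapsTo ha)]
  · rw [comp_apply, hgf a ha, comp_apply]
    exact hh.1.invOn_invFunOn.2 (hfD ⟨a, ha, rfl⟩)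

def cycCard (θ : A → A) (q : Quotient (compSetoid θ)) : Cardinal :=
  #(periodicPts θ ∩ Quotient.mk (compSetoid θ) ⁻¹' {q} : Set A)

theorem cycCard_mk (x : A) :
    cycCard θ (Quotient.mk _ x) = #(periodicPts θ ∩ comp θ x : Set A) := by
  rw [cycCard, preimage_mk_singleton_mk]

theorem exists_perm_cycCard_eq {S : Set A} (hS : S.Finite) {f : A → A}
    (hinj : InjOn f (cl θ S)) (hf : ∀ a ∈ cl θ S, f (θ a) = θ (f a)) :
    ∃ Φ : Equiv.Perm (Quotient (compSetoid θ)), (∀ q, cycCard θ (Φ q) = cycCard θ q) ∧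
      ∀ s ∈ S, Φ (Quotient.mk _ s) = Quotient.mk _ (f s) := by
  have hpf {a b : A} (ha : a ∈ cl θ S) (hb : b ∈ cl θ S) :
      Quotient.mk (compSetoid θ) (f a) = Quotient.mk _ (f b) ↔
        Quotient.mk (compSetoid θ) a = Quotient.mk _ b :=
    mk_eq_mk_iff.trans ((apply_mem_comp_apply_iff (mapsTo_cl S) hinj hf ha hb).trans mk_eq_mk_iff.symm)
  let φ := extend (fun s : S => Quotient.mk (compSetoid θ) s) (fun s => Quotient.mk _ (f s)) id
  have hφ (s : A) (hs : s ∈ S) : φ (Quotient.mk _ s) = Quotient.mk _ (f s) :=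
    FactorsThrough.extend_apply (fun (s s' : S) e => (hpf (subset_cl S s.2) (subset_cl S s'.2)).2 e)
      id ⟨s, hs⟩
  obtain ⟨Φ, hΦν, hΦφ⟩ := exists_perm_extend_of_fiberwise (cycCard θ) (hS.image _) (φ := φ)
    (by
      rintro _ ⟨s, hs, rfl⟩ _ ⟨s', hs', rfl⟩ e
      rw [hφ s hs, hφ s' hs'] at e
      exact (hpf (subset_cl S hs) (subset_cl S hs')).1 e)
    (by
      rintro _ ⟨s, hs, rfl⟩
      rw [hφ s hs, cycCard_mk, cycCard_mk]
      exact mk_periodicPts_inter_comp_apply (mapsTo_cl S) hinj hf (subset_cl S hs))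
  exact ⟨Φ, hΦν, fun s hs => (hΦφ _ (mem_image_of_mem _ hs)).trans (hφ s hs)⟩

theorem extendsToAuto_of_uhOn_comp (hU : ∀ x, UHOn θ (comp θ x))
    (hI : ∀ x y : A, #(periodicPts θ ∩ comp θ x : Set A) = #(periodicPts θ ∩ comp θ y : Set A) →
      ∃ h : A → A, IsoOn θ (comp θ x) (comp θ y) h)
    {S : Set A} (hS : S.Finite) {f : A → A} (hinj : InjOn f (cl θ S))
    (hf : ∀ a ∈ cl θ S, f (θ a) = θ (f a)) : ExtendsToAuto θ (cl θ S) f := by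
  obtain ⟨Φ, hΦ, hΦf⟩ := exists_perm_cycCard_eq hS hinj hf
  set p := Quotient.mk (compSetoid θ)
  have key (q) : ∃ g : A → A, IsoOn θ (p ⁻¹' {q}) (p ⁻¹' {Φ q}) g ∧
      ∀ a ∈ cl θ S ∩ p ⁻¹' {q}, g a = f a := by
    induction q using Quotient.inductionOn with | h x => ?_
    obtain ⟨y, hy⟩ := Quotient.exists_rep (Φ (p x))
    have hxy : p y = Φ (p x) := hy
    rw [← hxy, preimage_mk_singleton_mk, preimage_mk_singleton_mk]
    obtain ⟨h, hh⟩ := hI x y (by rw [← cycCard_mk, ← cycCard_mk, hy, hΦ])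
    have hfS : f '' (S ∩ comp θ x) ⊆ comp θ y := by
      rintro _ ⟨s, ⟨hs, hxs⟩, rfl⟩
      rw [← preimage_mk_singleton_mk y]
      show p (f s) = p y
      rw [← hΦf s hs, hxy]
      exact congrArg Φ (mk_eq_mk_iff.2 hxs).symm
    obtain ⟨g, hg, hgf⟩ := exists_isoOn_extend_of_uhOn (hU x) (mapsTo_comp x) (mapsTo_comp y) hh
      (hS.inter_of_left _) inter_subset_right (hinj.mono (cl_mono inter_subset_left))
      (fun a ha => hf a (cl_mono inter_subset_left ha)) hfS
    exact ⟨g, hg, fun a ha => hgf a (cl_inter_comp_subset S x ha)⟩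
  choose g hg hgf using key
  refine ⟨fun a => g (p a) a, bijective_of_bijOn_fibers Φ fun q => (hg q).1, fun a => ?_,
    fun a ha => hgf _ a ⟨ha, rfl⟩⟩
  have hθ : p a = p (θ a) := Quotient.sound (mapsTo_comp a (mem_comp_self a))
  simp only [← hθ]
  exact (hg (p a)).2 a rfl

end Backward

end Monounary

theorem stmt_17 {A : Type*} (θ : A → A) :
    (∀ S T : Set A, S.Finite → T.Finite → ∀ f : A → A,
        IsoOn θ (cl θ S) (cl θ T) f → ExtendsToAuto θ (cl θ S) f)
    ↔ ((∀ x : A, UHOn θ (comp θ x)) ∧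
        ∀ x y : A,
          Cardinal.mk {z | (∃ k ≥ 1, θ^[k] z = z) ∧ z ∈ comp θ x}
            = Cardinal.mk {z | (∃ k ≥ 1, θ^[k] z = z) ∧ z ∈ comp θ y} →
          ∃ f : A → A, Set.BijOn f (comp θ x) (comp θ y) ∧
            ∀ a ∈ comp θ x, f (θ a) = θ (f a)) := by
  refine ⟨fun H => ⟨Monounary.Ultrahomogeneous.uhOn_comp H,
    fun x y h => Monounary.Ultrahomogeneous.exists_isoOn_comp H h⟩, ?_⟩
  rintro ⟨hU, hI⟩ S T hS - f hf
  exact Monounary.extendsToAuto_of_uhOn_comp hU hI hS hf.1.injOn hf.2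
end

section
/- Let (A, θ) be a monounary algebra with no cyclic elements. Then A is ultrahomogeneous if and only if its automorphism group is transitive (for all x, y ∈ A there is an automorphism mapping x to y). -/
namespace Stmt18

variable {A : Type*} {θ : A → A}

lemma comm_iter {g : A → A} (hg : ∀ a, g (θ a) = θ (g a)) :
    ∀ (n : ℕ) (a : A), g (θ^[n] a) = θ^[n] (g a) := by
  intro n
  induction n with
  | zero => intro a; rfl
  | succ n ih =>
    intro a
    rw [Function.iterate_succ_apply, ih, hg, ← Function.iterate_succ_apply]

lemma symm_comm {e : A ≃ A} (he : ∀ a, e (θ a) = θ (e a)) (a : A) :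
    e.symm (θ a) = θ (e.symm a) := by
  apply e.injective
  rw [Equiv.apply_symm_apply, he, Equiv.apply_symm_apply]

lemma iter_inj (hnocyc : ∀ z : A, ¬ ∃ k ≥ 1, θ^[k] z = z) (x : A) :
    ∀ {m n : ℕ}, θ^[m] x = θ^[n] x → m = n := by
  intro m n h
  wlog hmn : m ≤ n generalizing m n
  · exact (this h.symm (le_of_not_ge hmn)).symm
  obtain ⟨k, rfl⟩ := Nat.le.dest hmn
  rcases Nat.eq_zero_or_pos k with hk | hk
  · simp [hk]
  · exfalso
    exact hnocyc (θ^[m] x) ⟨k, hk, by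
      rw [← Function.iterate_add_apply, Nat.add_comm, ← h]⟩

/-- subtree below `w` -/
def Tset (θ : A → A) (w : A) : Set A := {z | ∃ m : ℕ, θ^[m] z = w}

/-- connected component of `w` -/
def Cset (θ : A → A) (w : A) : Set A := {z | ∃ m n : ℕ, θ^[m] z = θ^[n] w}

lemma swap_auto (e : A ≃ A) (he : ∀ a, e (θ a) = θ (e a)) (P Q : Set A)
    (hPQ : e '' P = Q) (hdisj : ∀ z, z ∈ P → z ∈ Q → False)
    (h1 : ∀ z ∈ P, θ z ∈ P ∨ (θ z ∉ P ∧ θ z ∉ Q ∧ θ (e z) = θ z))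
    (h2 : ∀ z ∈ Q, θ z ∈ Q ∨ (θ z ∉ P ∧ θ z ∉ Q ∧ θ (e.symm z) = θ z))
    (h3 : ∀ z, z ∉ P → z ∉ Q → θ z ∉ P ∧ θ z ∉ Q) :
    ∃ g : A ≃ A, (∀ a, g (θ a) = θ (g a)) ∧ (∀ z ∈ P, g z = e z) ∧
      (∀ z ∈ Q, g z = e.symm z) ∧ (∀ z, z ∉ P → z ∉ Q → g z = z) := by
  classical
  have hePQ : ∀ z ∈ P, e z ∈ Q := fun z hz => hPQ ▸ ⟨z, hz, rfl⟩
  have heQP : ∀ z ∈ Q, e.symm z ∈ P := by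
    intro z hz
    rw [← hPQ] at hz
    obtain ⟨p, hp, rfl⟩ := hz
    simpa using hp
  set F : A → A := fun z => if z ∈ P then e z else if z ∈ Q then e.symm z else z with hF
  have hFP : ∀ z ∈ P, F z = e z := by intro z hz; simp [hF, hz]
  have hFQ : ∀ z ∈ Q, F z = e.symm z := by
    intro z hz
    have : z ∉ P := fun h => hdisj z h hz
    simp [hF, hz, this]
  have hFO : ∀ z, z ∉ P → z ∉ Q → F z = z := by intro z h h'; simp [hF, h, h']
  have hinv : Function.Involutive F := by
    intro z
    by_cases hz : z ∈ P
    · rw [hFP z hz, hFQ _ (hePQ z hz), Equiv.symm_apply_apply]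
    · by_cases hz' : z ∈ Q
      · rw [hFQ z hz', hFP _ (heQP z hz'), Equiv.apply_symm_apply]
      · rw [hFO z hz hz', hFO z hz hz']
  refine ⟨hinv.toPerm F, ?_, hFP, hFQ, hFO⟩
  intro a
  show F (θ a) = θ (F a)
  by_cases ha : a ∈ P
  · rcases h1 a ha with h | ⟨hnp, hnq, hcomm⟩
    · rw [hFP _ h, hFP _ ha, he]
    · rw [hFO _ hnp hnq, hFP _ ha, hcomm]
  · by_cases ha' : a ∈ Q
    · rcases h2 a ha' with h | ⟨hnp, hnq, hcomm⟩
      · rw [hFQ _ h, hFQ _ ha', symm_comm he]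
      · rw [hFO _ hnp hnq, hFQ _ ha', hcomm]
    · obtain ⟨hp, hq⟩ := h3 a ha ha'
      rw [hFO _ hp hq, hFO _ ha ha']

lemma inv_auto (e : A ≃ A) (he : ∀ a, e (θ a) = θ (e a)) (P : Set A)
    (hP : e '' P = P) (hcl : ∀ z, θ z ∈ P ↔ z ∈ P) :
    ∃ g : A ≃ A, (∀ a, g (θ a) = θ (g a)) ∧ (∀ z ∈ P, g z = e z) ∧
      (∀ z, z ∉ P → g z = z) := by
  classical
  have heP : ∀ z ∈ P, e z ∈ P := fun z hz => hP ▸ ⟨z, hz, rfl⟩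
  have heP' : ∀ z ∈ P, e.symm z ∈ P := by
    intro z hz
    rw [← hP] at hz
    obtain ⟨p, hp, rfl⟩ := hz
    simpa using hp
  set F : A → A := fun z => if z ∈ P then e z else z with hF
  set G : A → A := fun z => if z ∈ P then e.symm z else z with hG
  have hFP : ∀ z ∈ P, F z = e z := by intro z hz; simp [hF, hz]
  have hFO : ∀ z, z ∉ P → F z = z := by intro z h; simp [hF, h]
  have hGP : ∀ z ∈ P, G z = e.symm z := by intro z hz; simp [hG, hz]
  have hGO : ∀ z, z ∉ P → G z = z := by intro z h; simp [hG, h]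
  have hl : Function.LeftInverse G F := by
    intro z
    by_cases hz : z ∈ P
    · rw [hFP z hz, hGP _ (heP z hz), Equiv.symm_apply_apply]
    · rw [hFO z hz, hGO z hz]
  have hr : Function.RightInverse G F := by
    intro z
    by_cases hz : z ∈ P
    · rw [hGP z hz, hFP _ (heP' z hz), Equiv.apply_symm_apply]
    · rw [hGO z hz, hFO z hz]
  refine ⟨⟨F, G, hl, hr⟩, ?_, hFP, hFO⟩
  intro a
  show F (θ a) = θ (F a)
  by_cases ha : a ∈ P
  · rw [hFP _ ((hcl a).mpr ha), hFP _ ha, he]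
  · have : θ a ∉ P := fun h => ha ((hcl a).mp h)
    rw [hFO _ this, hFO _ ha]

section Main
variable (hnocyc : ∀ z : A, ¬ ∃ k ≥ 1, θ^[k] z = z)
variable (htr : ∀ x y : A, ∃ e : A ≃ A, (∀ a, e (θ a) = θ (e a)) ∧ e x = y)

include hnocyc htr

lemma swap_subtree {x y : A} (hxy : x ≠ y) (hθ : θ x = θ y) :
    ∃ g : A ≃ A, (∀ a, g (θ a) = θ (g a)) ∧ g x = y ∧
      ∀ z, z ∉ Tset θ x → z ∉ Tset θ y → g z = z := by
  obtain ⟨e, he, hex⟩ := htr x y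
  have hesymm : e.symm y = x := by rw [← hex, Equiv.symm_apply_apply]
  have himg : e '' Tset θ x = Tset θ y := by
    apply Set.Subset.antisymm
    · rintro _ ⟨z, ⟨m, hm⟩, rfl⟩
      exact ⟨m, by rw [← comm_iter he, hm, hex]⟩
    · rintro w ⟨m, hm⟩
      refine ⟨e.symm w, ⟨m, ?_⟩, by simp⟩
      rw [← comm_iter (fun a => symm_comm he a), hm, hesymm]
  have hdisj : ∀ z, z ∈ Tset θ x → z ∈ Tset θ y → False := by
    rintro z ⟨m, hm⟩ ⟨n, hn⟩
    rcases le_total m n with hmn | hmn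
    · obtain ⟨k, rfl⟩ := Nat.le.dest hmn
      have hky : θ^[k] x = y := by
        rw [← hm, ← Function.iterate_add_apply, Nat.add_comm, hn]
      rcases Nat.eq_zero_or_pos k with hk | hk
      · exact hxy (by rw [hk, Function.iterate_zero_apply] at hky; exact hky)
      · exact hnocyc (θ x) ⟨k, hk, by
          rw [← Function.iterate_succ_apply, Function.iterate_succ_apply', hky, hθ]⟩
    · obtain ⟨k, rfl⟩ := Nat.le.dest hmn
      have hky : θ^[k] y = x := by
        rw [← hn, ← Function.iterate_add_apply, Nat.add_comm, hm]
      rcases Nat.eq_zero_or_pos k with hk | hk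
      · exact hxy (by rw [hk, Function.iterate_zero_apply] at hky; exact hky.symm)
      · refine hnocyc (θ y) ⟨k, hk, ?_⟩
        rw [← Function.iterate_succ_apply, Function.iterate_succ_apply', hky]
        exact hθ
  have hθx_notTx : θ x ∉ Tset θ x := by
    rintro ⟨j, hj⟩
    have h1 : θ^[j+1] x = θ^[0] x := by
      rw [Function.iterate_succ_apply]; exact hj
    have := iter_inj hnocyc x h1
    omega
  have hθx_notTy : θ x ∉ Tset θ y := by
    rintro ⟨j, hj⟩
    exact hnocyc (θ x) ⟨j+1, by omega, by
      rw [Function.iterate_succ_apply' θ j (θ x), hj, hθ]⟩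
  have hθy_notTx : θ y ∉ Tset θ x := by rw [← hθ]; exact hθx_notTx
  have hθy_notTy : θ y ∉ Tset θ y := by rw [← hθ]; exact hθx_notTy
  have h1 : ∀ z ∈ Tset θ x, θ z ∈ Tset θ x ∨
      (θ z ∉ Tset θ x ∧ θ z ∉ Tset θ y ∧ θ (e z) = θ z) := by
    rintro z ⟨m, hm⟩
    cases m with
    | zero =>
      simp only [Function.iterate_zero_apply] at hm
      subst hm
      exact Or.inr ⟨hθx_notTx, hθx_notTy, by rw [hex, ← hθ]⟩
    | succ m =>
      exact Or.inl ⟨m, by rw [← Function.iterate_succ_apply]; exact hm⟩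
  have h2 : ∀ z ∈ Tset θ y, θ z ∈ Tset θ y ∨
      (θ z ∉ Tset θ x ∧ θ z ∉ Tset θ y ∧ θ (e.symm z) = θ z) := by
    rintro z ⟨m, hm⟩
    cases m with
    | zero =>
      simp only [Function.iterate_zero_apply] at hm
      subst hm
      exact Or.inr ⟨hθy_notTx, hθy_notTy, by rw [hesymm, hθ]⟩
    | succ m =>
      exact Or.inl ⟨m, by rw [← Function.iterate_succ_apply]; exact hm⟩
  have h3 : ∀ z, z ∉ Tset θ x → z ∉ Tset θ y →
      θ z ∉ Tset θ x ∧ θ z ∉ Tset θ y := by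
    intro z hzx hzy
    constructor
    · rintro ⟨j, hj⟩
      exact hzx ⟨j+1, by rw [Function.iterate_succ_apply]; exact hj⟩
    · rintro ⟨j, hj⟩
      exact hzy ⟨j+1, by rw [Function.iterate_succ_apply]; exact hj⟩
  obtain ⟨g, hgc, hgP, hgQ, hgO⟩ := swap_auto e he (Tset θ x) (Tset θ y)
    himg hdisj (fun z hz => h1 z hz) (fun z hz => h2 z hz) h3
  exact ⟨g, hgc, by rw [hgP x ⟨0, rfl⟩, hex], hgO⟩

lemma tree_move : ∀ c : ℕ, ∀ x y : A, θ^[c+1] x = θ^[c+1] y →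
    ∃ g : A ≃ A, (∀ a, g (θ a) = θ (g a)) ∧ g x = y ∧
      ∀ z, z ∉ Tset θ (θ^[c] x) → z ∉ Tset θ (θ^[c] y) → g z = z := by
  intro c
  induction c with
  | zero =>
    intro x y h
    simp only [zero_add, Function.iterate_one] at h
    by_cases hxy : x = y
    · exact ⟨Equiv.refl A, fun a => rfl, hxy, fun z _ _ => rfl⟩
    · obtain ⟨g, hgc, hgx, hgfix⟩ := swap_subtree hnocyc htr hxy h
      exact ⟨g, hgc, hgx, fun z hz hz' =>
        hgfix z (by simpa using hz) (by simpa using hz')⟩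
  | succ c ih =>
    intro x y h
    have hθ' : θ (θ^[c+1] x) = θ (θ^[c+1] y) := by
      rw [← Function.iterate_succ_apply' θ (c+1) x,
        ← Function.iterate_succ_apply' θ (c+1) y]
      exact h
    by_cases hxy' : θ^[c+1] x = θ^[c+1] y
    · obtain ⟨g, hgc, hgx, hgfix⟩ := ih x y hxy'
      refine ⟨g, hgc, hgx, fun z hz hz' => hgfix z ?_ ?_⟩
      · rintro ⟨m, hm⟩
        exact hz ⟨m+1, by
          rw [Function.iterate_succ_apply' θ m z, hm,
            ← Function.iterate_succ_apply' θ c x]⟩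
      · rintro ⟨m, hm⟩
        exact hz' ⟨m+1, by
          rw [Function.iterate_succ_apply' θ m z, hm,
            ← Function.iterate_succ_apply' θ c y]⟩
    · obtain ⟨g₁, hg₁c, hg₁x, hg₁fix⟩ := swap_subtree hnocyc htr hxy' hθ'
      have hx1 : θ^[c+1] (g₁ x) = θ^[c+1] y := by
        rw [← comm_iter hg₁c, hg₁x]
      obtain ⟨g₂, hg₂c, hg₂x, hg₂fix⟩ := ih (g₁ x) y hx1
      refine ⟨g₁.trans g₂, ?_, ?_, ?_⟩
      · intro a; simp only [Equiv.trans_apply]; rw [hg₁c, hg₂c]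
      · simp only [Equiv.trans_apply]; exact hg₂x
      · intro z hzx hzy
        have hz1 : g₁ z = z := hg₁fix z hzx hzy
        simp only [Equiv.trans_apply]
        rw [hz1]
        apply hg₂fix
        · rintro ⟨m, hm⟩
          refine hzy ⟨m+1, ?_⟩
          rw [Function.iterate_succ_apply' θ m z, hm,
            ← Function.iterate_succ_apply' θ c (g₁ x), hx1]
        · rintro ⟨m, hm⟩
          refine hzy ⟨m+1, ?_⟩
          rw [Function.iterate_succ_apply' θ m z, hm,
            ← Function.iterate_succ_apply' θ c y]

lemma move (l : List A) (s u : A)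
    (hrel : ∀ s' ∈ l, ∀ a b : ℕ, θ^[a] s = θ^[b] s' ↔ θ^[a] u = θ^[b] s') :
    ∃ h : A ≃ A, (∀ a, h (θ a) = θ (h a)) ∧ h s = u ∧ ∀ s' ∈ l, h s' = s' := by
  classical
  by_cases hc : ∃ s' ∈ l, ∃ a b : ℕ, θ^[a] s = θ^[b] s'
  · -- s meets the component of some listed element
    obtain ⟨s', hs', a, b, hab⟩ := hc
    have hub : θ^[a] u = θ^[b] s' := (hrel s' hs' a b).mp hab
    have hex : ∃ c : ℕ, θ^[c] s = θ^[c] u := ⟨a, hab.trans hub.symm⟩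
    rcases hfind : Nat.find hex with _ | c
    · have hspec := Nat.find_spec hex
      rw [hfind] at hspec
      simp only [Function.iterate_zero_apply] at hspec
      exact ⟨Equiv.refl A, fun a => rfl, hspec, fun t _ => rfl⟩
    · have hspec := Nat.find_spec hex
      rw [hfind] at hspec
      have hmin : ¬ θ^[c] s = θ^[c] u := Nat.find_min hex (by omega)
      obtain ⟨g, hgc, hgs, hgfix⟩ := tree_move hnocyc htr c s u hspec
      refine ⟨g, hgc, hgs, fun t ht => hgfix t ?_ ?_⟩
      · rintro ⟨m, hm⟩
        have hcu : θ^[c] u = θ^[m] t := (hrel t ht c m).mp hm.symm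
        exact hmin (hcu.trans hm).symm
      · rintro ⟨m, hm⟩
        have := (hrel t ht c m).mpr hm.symm
        exact hmin (this.trans hm)
  · -- s lies in a component disjoint from all listed elements
    push_neg at hc
    have hcu : ∀ s' ∈ l, ∀ a b : ℕ, θ^[a] u ≠ θ^[b] s' := by
      intro s' hs' a b h
      exact hc s' hs' a b ((hrel s' hs' a b).mpr h)
    obtain ⟨e, he, hes⟩ := htr s u
    have hesymm : e.symm u = s := by rw [← hes, Equiv.symm_apply_apply]
    have himg : e '' Cset θ s = Cset θ u := by
      apply Set.Subset.antisymm
      · rintro _ ⟨z, ⟨m, n, hmn⟩, rfl⟩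
        exact ⟨m, n, by rw [← comm_iter he, hmn, comm_iter he, hes]⟩
      · rintro w ⟨m, n, hmn⟩
        refine ⟨e.symm w, ⟨m, n, ?_⟩, by simp⟩
        rw [← comm_iter (fun a => symm_comm he a), hmn,
          comm_iter (fun a => symm_comm he a), hesymm]
    have hclC : ∀ w z : A, θ z ∈ Cset θ w ↔ z ∈ Cset θ w := by
      intro w z
      constructor
      · rintro ⟨m, n, hmn⟩
        exact ⟨m+1, n, by rw [Function.iterate_succ_apply]; exact hmn⟩
      · rintro ⟨m, n, hmn⟩
        refine ⟨m, n+1, ?_⟩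
        calc θ^[m] (θ z) = θ^[m+1] z := (Function.iterate_succ_apply θ m z).symm
          _ = θ (θ^[m] z) := Function.iterate_succ_apply' θ m z
          _ = θ (θ^[n] w) := by rw [hmn]
          _ = θ^[n+1] w := (Function.iterate_succ_apply' θ n w).symm
    have hsnotl : ∀ t ∈ l, t ∉ Cset θ s := by
      rintro t ht ⟨m, n, hmn⟩
      exact hc t ht n m hmn.symm
    have hunotl : ∀ t ∈ l, t ∉ Cset θ u := by
      rintro t ht ⟨m, n, hmn⟩
      exact hcu t ht n m hmn.symm
    by_cases hcomp : ∃ m n : ℕ, θ^[m] s = θ^[n] u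
    · have hCeq : Cset θ u = Cset θ s := by
        obtain ⟨p, q, hpq⟩ := hcomp
        ext z
        constructor
        · rintro ⟨m, n, hmn⟩
          refine ⟨q+m, n+p, ?_⟩
          rw [Function.iterate_add_apply θ q m z, hmn,
            Function.iterate_add_apply θ n p s, hpq,
            ← Function.iterate_add_apply, ← Function.iterate_add_apply,
            Nat.add_comm q n]
        · rintro ⟨m, n, hmn⟩
          refine ⟨p+m, n+q, ?_⟩
          rw [Function.iterate_add_apply θ p m z, hmn,
            ← Function.iterate_add_apply, Nat.add_comm p n,
            Function.iterate_add_apply θ n p s, hpq,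
            ← Function.iterate_add_apply]
      obtain ⟨g, hgc, hgP, hgO⟩ := inv_auto e he (Cset θ s)
        (by rw [himg, hCeq]) (hclC s)
      refine ⟨g, hgc, ?_, fun t ht => hgO t (hsnotl t ht)⟩
      rw [hgP s ⟨0, 0, rfl⟩, hes]
    · have hdisj : ∀ z, z ∈ Cset θ s → z ∈ Cset θ u → False := by
        rintro z ⟨m, n, hmn⟩ ⟨p, q, hpq⟩
        refine hcomp ⟨p+n, m+q, ?_⟩
        rw [Function.iterate_add_apply θ p n s, ← hmn,
          ← Function.iterate_add_apply, Nat.add_comm p m,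
          Function.iterate_add_apply θ m p z, hpq,
          ← Function.iterate_add_apply]
      obtain ⟨g, hgc, hgP, hgQ, hgO⟩ := swap_auto e he (Cset θ s) (Cset θ u)
        himg hdisj
        (fun z hz => Or.inl ((hclC s z).mpr hz))
        (fun z hz => Or.inl ((hclC u z).mpr hz))
        (fun z hz hz' => ⟨fun h => hz ((hclC s z).mp h), fun h => hz' ((hclC u z).mp h)⟩)
      refine ⟨g, hgc, ?_, fun t ht => hgO t (hsnotl t ht) (hunotl t ht)⟩
      rw [hgP s ⟨0, 0, rfl⟩, hes]

lemma ext_list : ∀ l : List A, ∀ f : A → A,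
    (∀ s₁ ∈ l, ∀ s₂ ∈ l, ∀ a b : ℕ, θ^[a] s₁ = θ^[b] s₂ ↔ θ^[a] (f s₁) = θ^[b] (f s₂)) →
    ∃ g : A ≃ A, (∀ a, g (θ a) = θ (g a)) ∧ ∀ s ∈ l, g s = f s := by
  intro l
  induction l with
  | nil => exact fun f _ => ⟨Equiv.refl A, fun a => rfl, by simp⟩
  | cons s l ih =>
    intro f hrel
    obtain ⟨g₀, hg₀c, hg₀⟩ := ih f (fun s₁ h₁ s₂ h₂ =>
      hrel s₁ (List.mem_cons_of_mem s h₁) s₂ (List.mem_cons_of_mem s h₂))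
    have hg₀s : ∀ t ∈ l, g₀.symm (f t) = t := fun t ht => by
      rw [← hg₀ t ht, Equiv.symm_apply_apply]
    have hrel' : ∀ t ∈ l, ∀ a b : ℕ,
        θ^[a] s = θ^[b] t ↔ θ^[a] (g₀.symm (f s)) = θ^[b] t := by
      intro t ht a b
      rw [hrel s List.mem_cons_self t (List.mem_cons_of_mem s ht) a b]
      constructor
      · intro h
        have h2 := congrArg g₀.symm h
        rw [comm_iter (fun a => symm_comm hg₀c a),
          comm_iter (fun a => symm_comm hg₀c a), hg₀s t ht] at h2
        exact h2
      · intro h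
        have h2 := congrArg g₀ h
        rw [comm_iter hg₀c, comm_iter hg₀c, Equiv.apply_symm_apply, hg₀ t ht] at h2
        exact h2
    obtain ⟨h, hhc, hhs, hhfix⟩ := move hnocyc htr l s (g₀.symm (f s)) hrel'
    refine ⟨h.trans g₀, fun a => by simp only [Equiv.trans_apply]; rw [hhc, hg₀c], ?_⟩
    intro t ht
    rcases List.mem_cons.mp ht with rfl | ht'
    · simp only [Equiv.trans_apply]; rw [hhs, Equiv.apply_symm_apply]
    · simp only [Equiv.trans_apply]; rw [hhfix t ht', hg₀ t ht']

end Main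
end Stmt18

theorem stmt_18 {A : Type*} (θ : A → A)
    (hnocyc : ∀ z : A, ¬ ∃ k ≥ 1, θ^[k] z = z) :
    (∀ S T : Set A, S.Finite → T.Finite → ∀ f : A → A,
        IsoOn θ (cl θ S) (cl θ T) f → ExtendsToAuto θ (cl θ S) f)
    ↔ ∀ x y : A, ∃ g : A → A, Function.Bijective g ∧
        (∀ a, g (θ a) = θ (g a)) ∧ g x = y := by
  classical
  constructor
  · -- ultrahomogeneous → transitive
    intro hU x y
    set f : A → A := fun a => if h : ∃ n : ℕ, θ^[n] x = a then θ^[h.choose] y else y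
      with hfdef
    have hfval : ∀ n : ℕ, f (θ^[n] x) = θ^[n] y := by
      intro n
      have h : ∃ k : ℕ, θ^[k] x = θ^[n] x := ⟨n, rfl⟩
      have hch : h.choose = n := Stmt18.iter_inj hnocyc x h.choose_spec
      simp only [hfdef, dif_pos h, hch]
    have hmem : ∀ a, a ∈ cl θ ({x} : Set A) ↔ ∃ n : ℕ, θ^[n] x = a := by
      intro a; simp [cl]
    have hiso : IsoOn θ (cl θ {x}) (cl θ {y}) f := by
      constructor
      · refine ⟨?_, ?_, ?_⟩
        · intro a ha
          obtain ⟨n, rfl⟩ := (hmem a).mp ha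
          rw [hfval n]
          exact ⟨y, rfl, n, rfl⟩
        · intro a ha b hb hab
          obtain ⟨n, rfl⟩ := (hmem a).mp ha
          obtain ⟨m, rfl⟩ := (hmem b).mp hb
          rw [hfval, hfval] at hab
          rw [Stmt18.iter_inj hnocyc y hab]
        · rintro b ⟨s, hs, n, rfl⟩
          rw [Set.mem_singleton_iff] at hs
          subst hs
          exact ⟨θ^[n] x, ⟨x, rfl, n, rfl⟩, hfval n⟩
      · intro a ha
        obtain ⟨n, rfl⟩ := (hmem a).mp ha
        calc f (θ (θ^[n] x)) = f (θ^[n+1] x) := by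
              rw [Function.iterate_succ_apply' θ n x]
          _ = θ^[n+1] y := hfval (n+1)
          _ = θ (θ^[n] y) := Function.iterate_succ_apply' θ n y
          _ = θ (f (θ^[n] x)) := by rw [hfval n]
    obtain ⟨g, hb, hcm, hagree⟩ := hU {x} {y} (Set.finite_singleton x)
      (Set.finite_singleton y) f hiso
    refine ⟨g, hb, hcm, ?_⟩
    have hx : x ∈ cl θ ({x} : Set A) := ⟨x, rfl, 0, rfl⟩
    rw [hagree x hx]
    simpa using hfval 0
  · -- transitive → ultrahomogeneous
    intro htr S T hS hT f hf
    have htr' : ∀ x y : A, ∃ e : A ≃ A, (∀ a, e (θ a) = θ (e a)) ∧ e x = y := by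
      intro x y
      obtain ⟨g, hb, hcm, hxy⟩ := htr x y
      exact ⟨Equiv.ofBijective g hb, hcm, hxy⟩
    set l := hS.toFinset.toList with hl
    have hmem : ∀ t, t ∈ l ↔ t ∈ S := by
      intro t; rw [hl, Finset.mem_toList, Set.Finite.mem_toFinset]
    have hfc : ∀ s ∈ S, ∀ n : ℕ, f (θ^[n] s) = θ^[n] (f s) := by
      intro s hs n
      induction n with
      | zero => rfl
      | succ n ihn =>
        rw [Function.iterate_succ_apply' θ n s, hf.2 _ ⟨s, hs, n, rfl⟩, ihn,
          ← Function.iterate_succ_apply' θ n (f s)]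
    have hrel : ∀ s₁ ∈ l, ∀ s₂ ∈ l, ∀ a b : ℕ,
        θ^[a] s₁ = θ^[b] s₂ ↔ θ^[a] (f s₁) = θ^[b] (f s₂) := by
      intro s₁ h₁ s₂ h₂ a b
      rw [hmem] at h₁ h₂
      constructor
      · intro h
        rw [← hfc s₁ h₁ a, ← hfc s₂ h₂ b, h]
      · intro h
        exact hf.1.2.1 ⟨s₁, h₁, a, rfl⟩ ⟨s₂, h₂, b, rfl⟩
          (by rw [hfc s₁ h₁ a, hfc s₂ h₂ b]; exact h)
    obtain ⟨g, hgc, hg⟩ := Stmt18.ext_list hnocyc htr' l f hrel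
    refine ⟨g, g.bijective, hgc, ?_⟩
    rintro a ⟨s, hs, n, rfl⟩
    rw [Stmt18.comm_iter hgc, hg s ((hmem s).mpr hs), ← hfc s hs n]
end

section
/- Let (A, θ) be a connected monounary algebra with nonempty set of cyclic elements, let c be a cyclic element, and let A_c = {c} ∪ {x not cyclic : ∃n ≥ 1, θ^n(x) = c, θ^{n−1}(x) not cyclic}, partially ordered by a ≥ b iff θ^k(a) = b for some k ≥ 0 (restricted to A_c). Then a bijection φ : A_c → A_c is an automorphism of the partial monounary algebra A_c if and only if it is an order automorphism of (A_c, ≤). -/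
open Function Set

theorem invFunOn_apply_commute {A : Type*} [Nonempty A] {θ φ : A → A} {s : Set A} (hφ : BijOn φ s s)
    (hdom : ∀ a ∈ s, (θ a ∈ s ↔ θ (φ a) ∈ s))
    (hcomm : ∀ a ∈ s, θ a ∈ s → φ (θ a) = θ (φ a)) :
    ∀ y ∈ s, θ y ∈ s → invFunOn φ s (θ y) = θ (invFunOn φ s y) := by
  intro y hy hθy
  have hinv := hφ.invOn_invFunOn
  set x := invFunOn φ s y
  have hx : x ∈ s := hφ.surjOn.mapsTo_invFunOn hy
  have hφx : φ x = y := hinv.2 hy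
  have hθx : θ x ∈ s := (hdom x hx).2 (hφx ▸ hθy)
  rw [← hφx, ← hcomm x hx hθx, hinv.1 hθx]

theorem exists_iterate_apply_eq_of_ne {A : Type*} {θ : A → A} {a b : A} {k : ℕ}
    (hk : θ^[k] a = b) (hne : b ≠ a) : ∃ j, θ^[j] (θ a) = b := by
  cases k with
  | zero => exact absurd hk.symm hne
  | succ j => exact ⟨j, hk⟩

namespace Az

variable {A : Type*} {θ : A → A} {φ : A → A} {c a b : A}

theorem mem_iff : a ∈ Az θ c ↔
    a = c ∨ (a ∉ periodicPts θ ∧ ∃ n, θ^[n + 1] a = c ∧ θ^[n] a ∉ periodicPts θ) :=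
  Iff.rfl

theorem self_mem : c ∈ Az θ c := Or.inl rfl

theorem eq_of_mem_periodicPts (ha : a ∈ Az θ c) (hper : a ∈ periodicPts θ) : a = c :=
  (mem_iff.1 ha).resolve_right fun h ↦ h.1 hper

theorem notMem_periodicPts (ha : a ∈ Az θ c) (hne : a ≠ c) : a ∉ periodicPts θ :=
  ((mem_iff.1 ha).resolve_left hne).1

theorem exists_iterate_eq (ha : a ∈ Az θ c) : ∃ k, θ^[k] a = c := by
  rcases mem_iff.1 ha with rfl | ⟨-, n, hn, -⟩
  · exact ⟨0, rfl⟩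
  · exact ⟨n + 1, hn⟩

theorem apply_mem (ha : a ∈ Az θ c) (hne : a ≠ c) : θ a ∈ Az θ c := by
  obtain ⟨-, n, hn, hn'⟩ := (mem_iff.1 ha).resolve_left hne
  cases n with
  | zero => exact Or.inl hn
  | succ m =>
    refine Or.inr ⟨fun hper ↦ hn' ?_, m, hn, hn'⟩
    exact (bijOn_periodicPts θ).mapsTo.iterate m hper

theorem eq_of_iterate_eq_of_iterate_eq (ha : a ∈ Az θ c) (hb : b ∈ Az θ c) {k j : ℕ}
    (hk : θ^[k] a = b) (hj : θ^[j] b = a) : a = b := by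
  rcases Nat.eq_zero_or_pos (j + k) with h | h
  · rw [← hk, Nat.eq_zero_of_add_eq_zero_left h, iterate_zero_apply]
  · have hper : a ∈ periodicPts θ :=
      mk_mem_periodicPts h (by rw [IsPeriodicPt, IsFixedPt, iterate_add_apply, hk, hj])
    have hbper : b ∈ periodicPts θ := hk ▸ (bijOn_periodicPts θ).mapsTo.iterate k hper
    rw [eq_of_mem_periodicPts ha hper, eq_of_mem_periodicPts hb hbper]

variable (hc : c ∈ periodicPts θ)
include hc

theorem iterate_self_eq (k : ℕ) (hk : θ^[k] c ∈ Az θ c) : θ^[k] c = c :=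
  eq_of_mem_periodicPts hk ((bijOn_periodicPts θ).mapsTo.iterate k hc)

theorem exists_iterate_map_eq (hcomm : ∀ a ∈ Az θ c, θ a ∈ Az θ c → φ (θ a) = θ (φ a))
    {k : ℕ} (ha : a ∈ Az θ c) (hb : b ∈ Az θ c) (hk : θ^[k] a = b) :
    ∃ j, θ^[j] (φ a) = φ b := by
  induction k generalizing a with
  | zero => exact ⟨0, congrArg φ hk⟩
  | succ k ih =>
    by_cases hac : a = c
    · subst hac
      exact ⟨0, by rw [← hk, iterate_self_eq hc _ (hk ▸ hb)]; rfl⟩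
    · have hθa := apply_mem ha hac
      obtain ⟨j, hj⟩ := ih hθa hk
      exact ⟨j + 1, by rw [iterate_succ_apply, ← hcomm a ha hθa, hj]⟩

section OrderAutomorphism

variable (hφ : BijOn φ (Az θ c) (Az θ c))
  (hord : ∀ a ∈ Az θ c, ∀ b ∈ Az θ c, ((∃ k, θ^[k] a = b) ↔ ∃ k, θ^[k] (φ a) = φ b))
include hφ hord

theorem map_self_eq : φ c = c := by
  obtain ⟨a, ha, hφa⟩ := hφ.surjOn (self_mem (θ := θ))
  obtain ⟨k, hk⟩ : ∃ k, θ^[k] c = a := by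
    rw [hord c self_mem a ha, hφa]
    exact exists_iterate_eq (hφ.mapsTo self_mem)
  rwa [← hk, iterate_self_eq hc k (hk ▸ ha)] at hφa

theorem map_ne_self (ha : a ∈ Az θ c) (hne : a ≠ c) : φ a ≠ c := fun h ↦
  hne (hφ.injOn ha self_mem (h.trans (map_self_eq hc hφ hord).symm))

theorem apply_mem_iff_apply_map_mem (ha : a ∈ Az θ c) :
    θ a ∈ Az θ c ↔ θ (φ a) ∈ Az θ c := by
  by_cases hac : a = c
  · rw [hac, map_self_eq hc hφ hord]
  · exact iff_of_true (apply_mem ha hac)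
      (apply_mem (hφ.mapsTo ha) (map_ne_self hc hφ hord ha hac))

/-- For `a ≠ c`, `θ a` is the largest element of `A_c` strictly below `a`, and both
`φ (θ a)` and `θ (φ a)` are the largest element strictly below `φ a`. -/
theorem map_apply (ha : a ∈ Az θ c) (hθa : θ a ∈ Az θ c) : φ (θ a) = θ (φ a) := by
  by_cases hac : a = c
  · subst hac
    have hfix : θ a = a := iterate_self_eq hc 1 hθa
    rw [hfix, map_self_eq hc hφ hord, hfix]
  have hφa := hφ.mapsTo ha
  have hφne := map_ne_self hc hφ hord ha hac
  have hθφa := apply_mem hφa hφne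
  have hθa_ne : θ a ≠ a := fun h ↦ notMem_periodicPts ha hac (mk_mem_periodicPts one_pos h)
  have hθφa_ne : θ (φ a) ≠ φ a := fun h ↦
    notMem_periodicPts hφa hφne (mk_mem_periodicPts one_pos h)
  obtain ⟨k, hk⟩ := (hord a ha (θ a) hθa).1 ⟨1, rfl⟩
  obtain ⟨i, hi⟩ := exists_iterate_apply_eq_of_ne hk fun h ↦ hθa_ne (hφ.injOn hθa ha h)
  obtain ⟨w, hw, hφw⟩ := hφ.surjOn hθφa
  obtain ⟨m, hm⟩ := (hord a ha w hw).2 ⟨1, hφw.symm⟩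
  obtain ⟨l, hl⟩ := exists_iterate_apply_eq_of_ne hm fun h ↦ hθφa_ne (by rw [← hφw, h])
  obtain ⟨j, hj⟩ := (hord (θ a) hθa w hw).1 ⟨l, hl⟩
  exact eq_of_iterate_eq_of_iterate_eq (hφ.mapsTo hθa) hθφa (hφw ▸ hj) hi

end OrderAutomorphism

end Az

theorem stmt_19_general {A : Type*} (θ : A → A)
    (c : A) (hc : ∃ k ≥ 1, θ^[k] c = c)
    (φ : A → A) (hφ : Set.BijOn φ (Az θ c) (Az θ c)) :
    ((∀ a ∈ Az θ c, (θ a ∈ Az θ c ↔ θ (φ a) ∈ Az θ c)) ∧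
        ∀ a ∈ Az θ c, θ a ∈ Az θ c → φ (θ a) = θ (φ a))
    ↔ ∀ a ∈ Az θ c, ∀ b ∈ Az θ c,
        ((∃ k : ℕ, θ^[k] a = b) ↔ ∃ k : ℕ, θ^[k] (φ a) = φ b) := by
  have hc : c ∈ periodicPts θ := hc
  have : Nonempty A := ⟨c⟩
  constructor
  · rintro ⟨hdom, hcomm⟩ a ha b hb
    refine ⟨fun ⟨k, hk⟩ ↦ Az.exists_iterate_map_eq hc hcomm ha hb hk, fun ⟨k, hk⟩ ↦ ?_⟩
    have hinv := hφ.invOn_invFunOn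
    have := Az.exists_iterate_map_eq hc (invFunOn_apply_commute hφ hdom hcomm)
      (hφ.mapsTo ha) (hφ.mapsTo hb) hk
    rwa [hinv.1 ha, hinv.1 hb] at this
  · intro hord
    exact ⟨fun a ha ↦ Az.apply_mem_iff_apply_map_mem hc hφ hord ha,
      fun a ha hθa ↦ Az.map_apply hc hφ hord ha hθa⟩

theorem stmt_19 {A : Type*} (θ : A → A)
    (hconn : ∀ x y : A, ∃ n m : ℕ, θ^[n] x = θ^[m] y)
    (c : A) (hc : ∃ k ≥ 1, θ^[k] c = c)
    (φ : A → A) (hφ : Set.BijOn φ (Az θ c) (Az θ c)) :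
    ((∀ a ∈ Az θ c, (θ a ∈ Az θ c ↔ θ (φ a) ∈ Az θ c)) ∧
        ∀ a ∈ Az θ c, θ a ∈ Az θ c → φ (θ a) = θ (φ a))
    ↔ ∀ a ∈ Az θ c, ∀ b ∈ Az θ c,
        ((∃ k : ℕ, θ^[k] a = b) ↔ ∃ k : ℕ, θ^[k] (φ a) = φ b) :=
  stmt_19_general θ c hc φ hφ
end
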